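/- arXiv:2007.02618 — 7 statements merged into one kernel-verified Lean document; each statement's English description precedes it below -/
import Mathlib

section
/- Let A₁ ∈ ℝ^{n₁×n₁} and A₂ ∈ ℝ^{n₂×n₂} be irreducible nonnegative square matrices and let A = A₁ ⊕ A₂ be their direct sum (block diagonal matrix). Suppose there exists t* ∈ (0,1) such that (1) ρ((1−t*)A₁ + t*A₁ᵀ) = ρ((1−t*)A₂ + t*A₂ᵀ), and (2) the derivatives at t = t* of t ↦ ρ((1−t)A₁ + tA₁ᵀ) and of t ↦ ρ((1−t)A₂ + tA₂ᵀ) are unequal. Then the function r(t) := ρ((1−t)A + tAᵀ) is not concave on (0,1). -/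
/-!
The Levinger combination of `A₁ ⊕ A₂` is the direct sum of the Levinger combinations of the
blocks, and the spectrum of a block-triangular matrix is the union of the spectra of its diagonal
blocks, so `r = max r₁ r₂`. If `r` were concave near `t*`, then
`φ ε = r₁ (t* + ε) + r₂ (t* - ε) ≤ r (t* + ε) + r (t* - ε) ≤ 2 r t* = φ 0`,
so `φ` would have a local maximum at `0`, forcing `φ' 0 = r₁' t* - r₂' t* = 0`.
-/

open Matrix

/-- The spectral radius of a real square matrix: the maximum modulus of its
(complex) eigenvalues. -/
noncomputable def specRad {m : Type*} [Fintype m] [DecidableEq m]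
    (M : Matrix m m ℝ) : ℝ :=
  (spectralRadius ℂ (M.map (fun x : ℝ => (x : ℂ)))).toReal

/-- A square matrix is irreducible if its associated directed graph is strongly
connected, i.e. for every pair of indices `i j` some power of the matrix has a
positive `(i,j)` entry. -/
def Irred {m : Type*} [Fintype m] [DecidableEq m] (M : Matrix m m ℝ) : Prop :=
  ∀ i j : m, ∃ k : ℕ, 0 < (M ^ (k + 1)) i j

open Filter Topology

section Spectrum

variable {m n : Type*} [Fintype m] [DecidableEq m] [Fintype n] [DecidableEq n]

theorem Matrix.spectrum_fromBlocks_zero₁₂ {K : Type*} [Field K] (A : Matrix m m K)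
    (C : Matrix n m K) (D : Matrix n n K) :
    spectrum K (fromBlocks A 0 C D) = spectrum K A ∪ spectrum K D := by
  ext μ
  simp only [mem_spectrum_iff_isRoot_charpoly, charpoly_fromBlocks_zero₁₂, Set.mem_union,
    Polynomial.IsRoot, Polynomial.eval_mul, mul_eq_zero]

variable {𝕜 : Type*} [NormedField 𝕜]

theorem Matrix.spectralRadius_ne_top (A : Matrix m m 𝕜) : spectralRadius 𝕜 A ≠ ⊤ := by
  have hbdd : BddAbove ((‖·‖₊) '' spectrum 𝕜 A) := ((finite_spectrum A).image _).bddAbove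
  refine ne_top_of_le_ne_top (ENNReal.coe_ne_top (r := sSup ((‖·‖₊) '' spectrum 𝕜 A))) ?_
  exact iSup₂_le fun k hk => ENNReal.coe_le_coe.2 (le_csSup hbdd ⟨k, hk, rfl⟩)

theorem Matrix.spectralRadius_fromBlocks_zero₁₂ (A : Matrix m m 𝕜) (C : Matrix n m 𝕜)
    (D : Matrix n n 𝕜) :
    spectralRadius 𝕜 (fromBlocks A 0 C D) = spectralRadius 𝕜 A ⊔ spectralRadius 𝕜 D := by
  simp only [spectralRadius, spectrum_fromBlocks_zero₁₂, iSup_union]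

theorem specRad_fromBlocks_zero₁₂ (A : Matrix m m ℝ) (C : Matrix n m ℝ) (D : Matrix n n ℝ) :
    specRad (fromBlocks A 0 C D) = max (specRad A) (specRad D) := by
  simp only [specRad, fromBlocks_map, Matrix.map_zero _ Complex.ofReal_zero,
    spectralRadius_fromBlocks_zero₁₂]
  exact ENNReal.toReal_sup (spectralRadius_ne_top _) (spectralRadius_ne_top _)

end Spectrum

theorem Matrix.smul_add_smul_transpose_fromBlocks {m n R α : Type*} [Monoid R]
    [AddMonoid α] [DistribMulAction R α] (a b : R) (A : Matrix m m α) (D : Matrix n n α) :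
    a • fromBlocks A 0 0 D + b • (fromBlocks A 0 0 D)ᵀ
      = fromBlocks (a • A + b • Aᵀ) 0 0 (a • D + b • Dᵀ) := by
  simp only [fromBlocks_transpose, transpose_zero, fromBlocks_smul, fromBlocks_add, smul_zero,
    add_zero]

theorem not_concaveOn_max_of_hasDerivAt {s : Set ℝ} {f g : ℝ → ℝ} {t a b : ℝ} (hs : s ∈ 𝓝 t)
    (heq : f t = g t) (hf : HasDerivAt f a t) (hg : HasDerivAt g b t) (hab : a ≠ b) :
    ¬ ConcaveOn ℝ s (fun x => max (f x) (g x)) := by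
  intro hconc
  set φ : ℝ → ℝ := fun ε => f (t + ε) + g (t - ε)
  have hφ : HasDerivAt φ (a - b) 0 := by
    have hf₀ : HasDerivAt (fun ε => f (t + ε)) a 0 :=
      HasDerivAt.comp_const_add t 0 (by rwa [add_zero])
    have hg₀ : HasDerivAt (fun ε => g (t - ε)) (-b) 0 :=
      HasDerivAt.comp_const_sub t 0 (by rwa [sub_zero])
    exact sub_eq_add_neg a b ▸ hf₀.add hg₀
  have hnear : ∀ᶠ ε in 𝓝 (0 : ℝ), t + ε ∈ s ∧ t - ε ∈ s := by
    have hplus : Tendsto (fun ε => t + ε) (𝓝 0) (𝓝 t) := by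
      simpa using (continuous_const_add t).tendsto 0
    have hminus : Tendsto (fun ε => t - ε) (𝓝 0) (𝓝 t) := by
      simpa using (continuous_sub_left t).tendsto 0
    exact (hplus.eventually hs).and (hminus.eventually hs)
  have hmax : IsLocalMax φ 0 := by
    filter_upwards [hnear] with ε ⟨hplus, hminus⟩
    have hmid := hconc.2 hplus hminus (by norm_num : (0 : ℝ) ≤ 1 / 2)
      (by norm_num : (0 : ℝ) ≤ 1 / 2) (by norm_num)
    have hpt : 1 / 2 * (t + ε) + 1 / 2 * (t - ε) = t := by ring
    simp only [smul_eq_mul] at hmid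
    rw [hpt, heq, max_self] at hmid
    simp only [φ, add_zero, sub_zero, heq]
    linarith [le_max_left (f (t + ε)) (g (t + ε)), le_max_right (f (t - ε)) (g (t - ε))]
  exact hab (sub_eq_zero.1 (hmax.hasDerivAt_eq_zero hφ))

theorem levinger_directSum_not_concave_general {n₁ n₂ : ℕ}
    (A₁ : Matrix (Fin n₁) (Fin n₁) ℝ) (A₂ : Matrix (Fin n₂) (Fin n₂) ℝ)
    (tstar : ℝ) (htstar : tstar ∈ Set.Ioo (0:ℝ) 1)
    (heq : specRad ((1 - tstar) • A₁ + tstar • A₁ᵀ)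
         = specRad ((1 - tstar) • A₂ + tstar • A₂ᵀ))
    (s₁ s₂ : ℝ)
    (hd₁ : HasDerivAt (fun t : ℝ => specRad ((1 - t) • A₁ + t • A₁ᵀ)) s₁ tstar)
    (hd₂ : HasDerivAt (fun t : ℝ => specRad ((1 - t) • A₂ + t • A₂ᵀ)) s₂ tstar)
    (hne : s₁ ≠ s₂) :
    ¬ ConcaveOn ℝ (Set.Ioo (0:ℝ) 1)
      (fun t : ℝ => specRad ((1 - t) • (Matrix.fromBlocks A₁ 0 0 A₂)
        + t • (Matrix.fromBlocks A₁ 0 0 A₂)ᵀ)) := by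
  have hmax : (fun t : ℝ => specRad ((1 - t) • (Matrix.fromBlocks A₁ 0 0 A₂)
        + t • (Matrix.fromBlocks A₁ 0 0 A₂)ᵀ))
      = fun t => max (specRad ((1 - t) • A₁ + t • A₁ᵀ)) (specRad ((1 - t) • A₂ + t • A₂ᵀ)) :=
    funext fun t => by rw [smul_add_smul_transpose_fromBlocks, specRad_fromBlocks_zero₁₂]
  rw [hmax]
  exact not_concaveOn_max_of_hasDerivAt (isOpen_Ioo.mem_nhds htstar) heq hd₁ hd₂ hne

/-- If the Levinger functions of two irreducible nonnegative blocks cross at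
`t* ∈ (0,1)` with unequal derivatives there, then the Levinger function of the
direct sum `A₁ ⊕ A₂` is not concave on `(0,1)`. -/
theorem levinger_directSum_not_concave {n₁ n₂ : ℕ}
    (A₁ : Matrix (Fin n₁) (Fin n₁) ℝ) (A₂ : Matrix (Fin n₂) (Fin n₂) ℝ)
    (hA₁nn : ∀ i j, 0 ≤ A₁ i j) (hA₂nn : ∀ i j, 0 ≤ A₂ i j)
    (hA₁irr : Irred A₁) (hA₂irr : Irred A₂)
    (tstar : ℝ) (htstar : tstar ∈ Set.Ioo (0:ℝ) 1)
    (heq : specRad ((1 - tstar) • A₁ + tstar • A₁ᵀ)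
         = specRad ((1 - tstar) • A₂ + tstar • A₂ᵀ))
    (s₁ s₂ : ℝ)
    (hd₁ : HasDerivAt (fun t : ℝ => specRad ((1 - t) • A₁ + t • A₁ᵀ)) s₁ tstar)
    (hd₂ : HasDerivAt (fun t : ℝ => specRad ((1 - t) • A₂ + t • A₂ᵀ)) s₂ tstar)
    (hne : s₁ ≠ s₂) :
    ¬ ConcaveOn ℝ (Set.Ioo (0:ℝ) 1)
      (fun t : ℝ => specRad ((1 - t) • (Matrix.fromBlocks A₁ 0 0 A₂)
        + t • (Matrix.fromBlocks A₁ 0 0 A₂)ᵀ)) :=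
  levinger_directSum_not_concave_general A₁ A₂ tstar htstar heq s₁ s₂ hd₁ hd₂ hne
end

section
/- Let A ∈ ℝ^{2×2} be nonnegative and irreducible. Then Levinger's function r(t) := ρ((1−t)A + tAᵀ) is concave on t ∈ (0,1), and strictly concave when the left and right Perron–Frobenius eigenvectors of A are not colinear (equivalently, when the two off-diagonal entries of A are unequal). -/
open Matrix

/-!
A real `2 × 2` matrix with real eigenvalues and nonnegative trace has spectral radius
`tr / 2 + √((tr / 2)² - det)`. Along Levinger's path `(1 - t) A + t Aᵀ` the diagonal is fixed and
the product of the off-diagonal entries is `A₀₁ A₁₀ + (A₀₁ - A₁₀)² t (1 - t)`, so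
`r(t) = (A₀₀ + A₁₁) / 2 + √(q t)` for a nonnegative quadratic `q` that is concave, and strictly
concave when `A₀₁ ≠ A₁₀`. Composing with the increasing concave `√` keeps (strict) concavity.
-/

open Set

theorem Matrix.mem_spectrum_fin_two {K : Type*} [Field K] (M : Matrix (Fin 2) (Fin 2) K) (z : K) :
    z ∈ spectrum K M ↔ (z - M 0 0) * (z - M 1 1) - M 0 1 * M 1 0 = 0 := by
  rw [spectrum.mem_iff, Matrix.isUnit_iff_isUnit_det, isUnit_iff_ne_zero, not_ne_iff,
    Matrix.det_fin_two]
  simp [Algebra.algebraMap_eq_smul_one]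

theorem spectrum_map_ofReal_fin_two (M : Matrix (Fin 2) (Fin 2) ℝ)
    (hdisc : 0 ≤ ((M 0 0 - M 1 1) / 2) ^ 2 + M 0 1 * M 1 0) :
    spectrum ℂ (M.map ((↑) : ℝ → ℂ)) =
      {(((M 0 0 + M 1 1) / 2 + √(((M 0 0 - M 1 1) / 2) ^ 2 + M 0 1 * M 1 0) : ℝ) : ℂ),
       (((M 0 0 + M 1 1) / 2 - √(((M 0 0 - M 1 1) / 2) ^ 2 + M 0 1 * M 1 0) : ℝ) : ℂ)} := by
  set r := √(((M 0 0 - M 1 1) / 2) ^ 2 + M 0 1 * M 1 0)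
  have hr : (r : ℂ) ^ 2 = ((M 0 0 - M 1 1) / 2 : ℂ) ^ 2 + M 0 1 * M 1 0 := by
    exact_mod_cast Real.sq_sqrt hdisc
  ext z
  have hfactor : (z - M 0 0) * (z - M 1 1) - M 0 1 * M 1 0 =
      (z - (((M 0 0 + M 1 1) / 2 + r : ℝ) : ℂ)) * (z - (((M 0 0 + M 1 1) / 2 - r : ℝ) : ℂ)) := by
    push_cast
    linear_combination hr
  rw [Matrix.mem_spectrum_fin_two]
  simp only [Matrix.map_apply]
  rw [hfactor, mul_eq_zero, sub_eq_zero, sub_eq_zero, mem_insert_iff, mem_singleton_iff]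

theorem specRad_fin_two (M : Matrix (Fin 2) (Fin 2) ℝ) (htr : 0 ≤ M 0 0 + M 1 1)
    (hdisc : 0 ≤ ((M 0 0 - M 1 1) / 2) ^ 2 + M 0 1 * M 1 0) :
    specRad M = (M 0 0 + M 1 1) / 2 + √(((M 0 0 - M 1 1) / 2) ^ 2 + M 0 1 * M 1 0) := by
  set s := √(((M 0 0 - M 1 1) / 2) ^ 2 + M 0 1 * M 1 0)
  have hs : 0 ≤ s := Real.sqrt_nonneg _
  have hle : ‖(M 0 0 + M 1 1) / 2 - s‖₊ ≤ ‖(M 0 0 + M 1 1) / 2 + s‖₊ := by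
    rw [← NNReal.coe_le_coe, coe_nnnorm, coe_nnnorm, Real.norm_eq_abs, Real.norm_eq_abs,
      abs_of_nonneg (by positivity : 0 ≤ (M 0 0 + M 1 1) / 2 + s)]
    exact abs_le.2 ⟨by linarith, by linarith⟩
  rw [specRad, spectralRadius, spectrum_map_ofReal_fin_two M hdisc, iSup_pair,
    Complex.nnnorm_real, Complex.nnnorm_real, sup_eq_left.2 (ENNReal.coe_le_coe.2 hle),
    ENNReal.coe_toReal, coe_nnnorm, Real.norm_eq_abs, abs_of_nonneg (by positivity)]

theorem specRad_levinger_fin_two (A : Matrix (Fin 2) (Fin 2) ℝ) (hA : ∀ i j, 0 ≤ A i j)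
    {t : ℝ} (ht : t ∈ Icc (0 : ℝ) 1) :
    specRad ((1 - t) • A + t • Aᵀ) = (A 0 0 + A 1 1) / 2 +
      √((((A 0 0 - A 1 1) / 2) ^ 2 + A 0 1 * A 1 0) + (A 0 1 - A 1 0) ^ 2 * (t * (1 - t))) := by
  obtain ⟨ht0, ht1⟩ := ht
  have hoff : ((1 - t) • A + t • Aᵀ) 0 1 * ((1 - t) • A + t • Aᵀ) 1 0 =
      A 0 1 * A 1 0 + (A 0 1 - A 1 0) ^ 2 * (t * (1 - t)) := by
    simp only [Matrix.add_apply, Matrix.smul_apply, transpose_apply, smul_eq_mul]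
    ring
  have hdiag (i : Fin 2) : ((1 - t) • A + t • Aᵀ) i i = A i i := by
    simp only [Matrix.add_apply, Matrix.smul_apply, transpose_apply, smul_eq_mul]
    ring
  rw [specRad_fin_two, hoff, hdiag, hdiag, add_assoc]
  · rw [hdiag, hdiag]
    linarith [hA 0 0, hA 1 1]
  · rw [hoff, hdiag, hdiag]
    have hbc := mul_nonneg (hA 0 1) (hA 1 0)
    have ht := mul_nonneg ht0 (sub_nonneg.2 ht1)
    positivity

theorem ConcaveOn.sqrt {E : Type*} [AddCommMonoid E] [Module ℝ E] {s : Set E} {f : E → ℝ}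
    (hf : ConcaveOn ℝ s f) (hf₀ : ∀ x ∈ s, 0 ≤ f x) : ConcaveOn ℝ s (fun x ↦ √(f x)) :=
  ⟨hf.1, fun _ hx _ hy _ _ ha hb hab ↦
    (Real.strictConcaveOn_sqrt.concaveOn.2 (hf₀ _ hx) (hf₀ _ hy) ha hb hab).trans
      (Real.sqrt_le_sqrt (hf.2 hx hy ha hb hab))⟩

theorem StrictConcaveOn.sqrt {E : Type*} [AddCommMonoid E] [Module ℝ E] {s : Set E} {f : E → ℝ}
    (hf : StrictConcaveOn ℝ s f) (hf₀ : ∀ x ∈ s, 0 ≤ f x) :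
    StrictConcaveOn ℝ s (fun x ↦ √(f x)) :=
  ⟨hf.1, fun _ hx _ hy hxy _ _ ha hb hab ↦
    (Real.strictConcaveOn_sqrt.concaveOn.2 (hf₀ _ hx) (hf₀ _ hy) ha.le hb.le hab).trans_lt
      (Real.sqrt_lt_sqrt (add_nonneg (mul_nonneg ha.le (hf₀ _ hx)) (mul_nonneg hb.le (hf₀ _ hy)))
        (hf.2 hx hy hxy ha hb hab))⟩

theorem add_mul_mul_one_sub_affine_combination (K C x y a b : ℝ) (hab : a + b = 1) :
    K + C * ((a * x + b * y) * (1 - (a * x + b * y))) =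
      a * (K + C * (x * (1 - x))) + b * (K + C * (y * (1 - y))) + C * (a * b * (x - y) ^ 2) := by
  obtain rfl : b = 1 - a := by linarith
  ring

theorem concaveOn_add_mul_mul_one_sub (K : ℝ) {C : ℝ} (hC : 0 ≤ C) :
    ConcaveOn ℝ univ (fun t : ℝ ↦ K + C * (t * (1 - t))) :=
  ⟨convex_univ, fun x _ y _ a b ha hb hab ↦ by
    simp only [smul_eq_mul, add_mul_mul_one_sub_affine_combination K C x y a b hab]
    have : 0 ≤ C * (a * b * (x - y) ^ 2) := by positivity
    linarith⟩

theorem strictConcaveOn_add_mul_mul_one_sub (K : ℝ) {C : ℝ} (hC : 0 < C) :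
    StrictConcaveOn ℝ univ (fun t : ℝ ↦ K + C * (t * (1 - t))) :=
  ⟨convex_univ, fun x _ y _ hxy a b ha hb hab ↦ by
    simp only [smul_eq_mul, add_mul_mul_one_sub_affine_combination K C x y a b hab]
    have : 0 < C * (a * b * (x - y) ^ 2) := by
      have hxy' := sub_ne_zero.2 hxy
      positivity
    linarith⟩

theorem levinger_concave_two_by_two_general (A : Matrix (Fin 2) (Fin 2) ℝ)
    (hnn : ∀ i j, 0 ≤ A i j) :
    ConcaveOn ℝ (Set.Ioo (0:ℝ) 1)
      (fun t : ℝ => specRad ((1 - t) • A + t • Aᵀ)) ∧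
    (A 0 1 ≠ A 1 0 →
      StrictConcaveOn ℝ (Set.Ioo (0:ℝ) 1)
        (fun t : ℝ => specRad ((1 - t) • A + t • Aᵀ))) := by
  set K := ((A 0 0 - A 1 1) / 2) ^ 2 + A 0 1 * A 1 0
  set C := (A 0 1 - A 1 0) ^ 2
  have hdisc : ∀ t ∈ Ioo (0 : ℝ) 1, 0 ≤ K + C * (t * (1 - t)) := fun t ⟨ht0, ht1⟩ ↦ by
    have hbc := mul_nonneg (hnn 0 1) (hnn 1 0)
    have ht := mul_pos ht0 (sub_pos.2 ht1)
    positivity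
  have hformula : EqOn ((fun t ↦ √(K + C * (t * (1 - t)))) + fun _ ↦ (A 0 0 + A 1 1) / 2)
      (fun t ↦ specRad ((1 - t) • A + t • Aᵀ)) (Ioo 0 1) := fun t ht ↦ by
    dsimp only [Pi.add_apply]
    rw [specRad_levinger_fin_two A hnn (Ioo_subset_Icc_self ht), add_comm]
  refine ⟨?_, fun hne ↦ ?_⟩
  · exact (((concaveOn_add_mul_mul_one_sub K (sq_nonneg _)).subset (subset_univ _)
      (convex_Ioo 0 1)).sqrt hdisc).add_const _ |>.congr hformula
  · have hC : 0 < C := sq_pos_of_ne_zero (sub_ne_zero.2 hne)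
    exact (((strictConcaveOn_add_mul_mul_one_sub K hC).subset (subset_univ _)
      (convex_Ioo 0 1)).sqrt hdisc).add_const _ |>.congr hformula

/-- Levinger's function of a nonnegative irreducible `2 × 2` matrix is concave
on `(0,1)`, and strictly concave when the two off-diagonal entries are unequal
(equivalently, when the left and right Perron vectors are not colinear). -/
theorem levinger_concave_two_by_two (A : Matrix (Fin 2) (Fin 2) ℝ)
    (hnn : ∀ i j, 0 ≤ A i j) (hirr : Irred A) :
    ConcaveOn ℝ (Set.Ioo (0:ℝ) 1)
      (fun t : ℝ => specRad ((1 - t) • A + t • Aᵀ)) ∧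
    (A 0 1 ≠ A 1 0 →
      StrictConcaveOn ℝ (Set.Ioo (0:ℝ) 1)
        (fun t : ℝ => specRad ((1 - t) • A + t • Aᵀ))) :=
  levinger_concave_two_by_two_general A hnn
end

section
/- Let A ∈ ℝ^{n×n}, n ≥ 2, be a tridiagonal Toeplitz matrix with diagonal entries b ≥ 0, subdiagonal entries a ≥ 0, and superdiagonal entries c ≥ 0, with max(a, c) > 0. Then for t ∈ (0,1), the function r(t) := ρ((1−t)A + tAᵀ) is concave in t, increasing on (0, 1/2), and decreasing on (1/2, 1), all strictly when a ≠ c. -/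
/-!
Write `A(α, b, γ)` for the tridiagonal Toeplitz matrix with entries `α, b, γ` and `P = A(1, 0, 1)`
for the adjacency matrix of the path. When `αγ > 0`, conjugation by `diag(dⁱ)` with a suitable `d`
turns `A(α, b, γ)` into `b + √(αγ) P`. Since `P` is Hermitian and conjugate to `-P` by
`diag((-1)ⁱ)`, its spectrum is real, symmetric and contains `±ρ(P)`, so
`ρ(A(α, b, γ)) = |b| + ρ(P) √(αγ)`, with `ρ(P) > 0` as soon as `n ≥ 2`.

The Levinger matrix `(1 - t) A(a, b, c) + t A(a, b, c)ᵀ` is `A(α, b, γ)` with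
`αγ = ac + t(1 - t)(a - c)²`. For `a ≠ c` this product is positive on `(0, 1)` and strictly concave,
increasing up to `1/2` and decreasing after it, and composing with the increasing concave map
`y ↦ |b| + ρ(P) √y` preserves all three properties. For `a = c` the matrix is symmetric and `r` is
constant.
-/

open Matrix

open Set Pointwise

def tridiag (n : ℕ) {R : Type*} [Zero R] (a b c : R) : Matrix (Fin n) (Fin n) R :=
  of fun i j =>
    if (i : ℕ) = j then b else if (i : ℕ) = j + 1 then a else if (j : ℕ) = i + 1 then c else 0

section tridiag

variable {n : ℕ}

theorem tridiag_transpose {R : Type*} [Zero R] (a b c : R) :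
    (tridiag n a b c)ᵀ = tridiag n c b a := by
  ext i j
  simp only [tridiag, transpose_apply, of_apply]
  split_ifs <;> first | rfl | omega

theorem tridiag_map {R S : Type*} [Zero R] [Zero S] (f : R → S) (hf : f 0 = 0) (a b c : R) :
    (tridiag n a b c).map f = tridiag n (f a) (f b) (f c) := by
  ext i j
  simp only [tridiag, map_apply, of_apply]
  split_ifs <;> first | rfl | exact hf

theorem smul_tridiag_add_smul_transpose {R : Type*} [CommRing R] {s t : R} (hst : s + t = 1)
    (a b c : R) :
    s • tridiag n a b c + t • (tridiag n a b c)ᵀ = tridiag n (s * a + t * c) b (s * c + t * a) := by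
  rw [tridiag_transpose]
  ext i j
  simp only [tridiag, Matrix.add_apply, Matrix.smul_apply, of_apply, smul_eq_mul]
  split_ifs <;> first | omega | linear_combination b * hst | ring

theorem tridiag_isHermitian {R : Type*} [Ring R] [StarRing R] {a b : R} (ha : star a = a)
    (hb : star b = b) : (tridiag n a b a).IsHermitian := by
  rw [IsHermitian, conjTranspose, tridiag_transpose, tridiag_map _ (star_zero R), ha, hb]

theorem diagonal_pow_mul_tridiag_mul_diagonal_inv {K : Type*} [Field K] {d : K} (hd : d ≠ 0)
    (a b c : K) :
    diagonal (fun i : Fin n => d ^ (i : ℕ)) * tridiag n a b c *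
        diagonal (fun i : Fin n => (d ^ (i : ℕ))⁻¹) = tridiag n (d * a) b (d⁻¹ * c) := by
  ext i j
  simp only [tridiag, mul_diagonal, diagonal_mul, of_apply]
  split_ifs with h1 h2 h3
  · rw [Fin.ext h1]; field_simp
  · rw [h2, pow_succ]; field_simp
  · rw [h3, pow_succ]; field_simp
  · simp

theorem spectrum_tridiag_mul_inv_mul {K : Type*} [Field K] {d : K} (hd : d ≠ 0) (a b c : K) :
    spectrum K (tridiag n (d * a) b (d⁻¹ * c)) = spectrum K (tridiag n a b c) := by
  let u : (Matrix (Fin n) (Fin n) K)ˣ :=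
    ⟨diagonal fun i => d ^ (i : ℕ), diagonal fun i => (d ^ (i : ℕ))⁻¹,
      by simp [diagonal_mul_diagonal, hd], by simp [diagonal_mul_diagonal, hd]⟩
  rw [← diagonal_pow_mul_tridiag_mul_diagonal_inv hd]
  exact spectrum.units_conjugate (u := u)

theorem tridiag_eq_algebraMap_add_smul {K : Type*} [Field K] (x b : K) :
    tridiag n x b x = algebraMap K _ b + x • tridiag n 1 0 1 := by
  ext i j
  simp only [tridiag, algebraMap_eq_diagonal, Matrix.add_apply, Matrix.smul_apply, of_apply,
    diagonal_apply, Pi.algebraMap_apply, Algebra.algebraMap_self, RingHom.id_apply, smul_eq_mul]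
  split_ifs <;> first | omega | simp_all

theorem spectrum_tridiag {K : Type*} [Field K] {a b c x : K} (hx : x ≠ 0) (hacx : a * c = x ^ 2) :
    spectrum K (tridiag n a b c) = b +ᵥ x • spectrum K (tridiag n (1 : K) 0 1) := by
  have ha : a ≠ 0 := left_ne_zero_of_mul (hacx ▸ pow_ne_zero 2 hx)
  have hd : a / x ≠ 0 := div_ne_zero ha hx
  have hc : c = (a / x)⁻¹ * x := by field_simp; linear_combination hacx
  have hac : tridiag n a b c = tridiag n (a / x * x) b ((a / x)⁻¹ * x) := by
    rw [div_mul_cancel₀ a hx, ← hc]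
  rw [hac, spectrum_tridiag_mul_inv_mul hd, tridiag_eq_algebraMap_add_smul,
    ← spectrum.vadd_eq, ← Units.val_mk0 hx, ← Units.smul_def, spectrum.unit_smul_eq_smul]
  rfl

end tridiag

theorem Matrix.IsHermitian.exists_ne_zero_mem_spectrum_forall_norm_le {𝕜 : Type*} [RCLike 𝕜]
    {m : Type*} [Fintype m] [DecidableEq m] {H : Matrix m m 𝕜} (hH : H.IsHermitian)
    (hne : H ≠ 0) :
    ∃ r : ℝ, r ≠ 0 ∧ (r : 𝕜) ∈ spectrum 𝕜 H ∧ ∀ z ∈ spectrum 𝕜 H, ‖z‖ ≤ |r| := by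
  have : Nonempty m := by
    by_contra hm
    exact hne (Matrix.ext fun i => ((not_nonempty_iff.mp hm).elim i))
  obtain ⟨i₀, hi₀⟩ := Finite.exists_max fun i => |hH.eigenvalues i|
  rw [hH.spectrum_eq_image_range]
  refine ⟨hH.eigenvalues i₀, fun h₀ => hne ?_, ⟨_, ⟨i₀, rfl⟩, rfl⟩, ?_⟩
  · rw [← hH.eigenvalues_eq_zero_iff]
    funext i
    simpa [h₀] using hi₀ i
  · rintro _ ⟨_, ⟨i, rfl⟩, rfl⟩
    simpa using hi₀ i

theorem exists_spectrum_tridiag_one_zero_one {n : ℕ} (hn : 2 ≤ n) :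
    ∃ μ : ℝ, 0 < μ ∧ (μ : ℂ) ∈ spectrum ℂ (tridiag n (1 : ℂ) 0 1) ∧
      (-μ : ℂ) ∈ spectrum ℂ (tridiag n (1 : ℂ) 0 1) ∧
      ∀ z ∈ spectrum ℂ (tridiag n (1 : ℂ) 0 1), ‖z‖ ≤ μ := by
  set P := tridiag n (1 : ℂ) 0 1
  have hP : P.IsHermitian := tridiag_isHermitian (star_one ℂ) (star_zero ℂ)
  have hne : P ≠ 0 := fun h => by
    simpa [P, tridiag] using congr_fun (congr_fun h ⟨0, by omega⟩) ⟨1, hn⟩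
  have hneg : ∀ z ∈ spectrum ℂ P, -z ∈ spectrum ℂ P := by
    have hJ : spectrum ℂ (-P) = spectrum ℂ P := by
      rw [← spectrum_tridiag_mul_inv_mul (neg_ne_zero.mpr one_ne_zero)]
      congr 1
      ext i j
      simp only [P, tridiag, Matrix.neg_apply, of_apply]
      split_ifs <;> norm_num
    intro z hz
    rw [← hJ, ← spectrum.neg_eq]
    simpa using hz
  obtain ⟨r, hr₀, hr, hmax⟩ := hP.exists_ne_zero_mem_spectrum_forall_norm_le hne
  refine ⟨|r|, abs_pos.mpr hr₀, ?_, ?_, hmax⟩ <;> rcases abs_choice r with h | h <;>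
    simp only [h, Complex.ofReal_neg, neg_neg] <;> first | exact hr | exact hneg _ hr

theorem specRad_eq_norm_of_mem_spectrum {m : Type*} [Fintype m] [DecidableEq m]
    {M : Matrix m m ℝ} {z₀ : ℂ} (h₀ : z₀ ∈ spectrum ℂ (M.map (fun x : ℝ => (x : ℂ))))
    (hmax : ∀ z ∈ spectrum ℂ (M.map (fun x : ℝ => (x : ℂ))), ‖z‖ ≤ ‖z₀‖) :
    specRad M = ‖z₀‖ := by
  have hρ : spectralRadius ℂ (M.map (fun x : ℝ => (x : ℂ))) = ‖z₀‖₊ :=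
    le_antisymm (iSup₂_le fun z hz => by exact_mod_cast hmax z hz)
      (le_iSup₂ (f := fun z _ => (‖z‖₊ : ENNReal)) z₀ h₀)
  rw [specRad, hρ]
  rfl

theorem exists_specRad_tridiag_eq {n : ℕ} (hn : 2 ≤ n) :
    ∃ μ : ℝ, 0 < μ ∧ ∀ {a c : ℝ}, 0 < a * c → ∀ b : ℝ,
      specRad (tridiag n a b c) = |b| + μ * √(a * c) := by
  obtain ⟨μ, hμ, hμmem, hnegμmem, hmax⟩ := exists_spectrum_tridiag_one_zero_one hn
  refine ⟨μ, hμ, fun {a c} hac b => ?_⟩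
  set r := √(a * c)
  have hr : 0 < r := Real.sqrt_pos.mpr hac
  have hσ : spectrum ℂ ((tridiag n a b c).map (fun x : ℝ => (x : ℂ))) =
      (b : ℂ) +ᵥ (r : ℂ) • spectrum ℂ (tridiag n (1 : ℂ) 0 1) := by
    rw [tridiag_map _ Complex.ofReal_zero]
    refine spectrum_tridiag (by exact_mod_cast hr.ne') ?_
    exact_mod_cast (Real.sq_sqrt hac.le).symm
  obtain ⟨w, hw, hbw⟩ : ∃ w : ℝ, (w : ℂ) ∈ spectrum ℂ (tridiag n (1 : ℂ) 0 1) ∧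
      ‖((b + r * w : ℝ) : ℂ)‖ = |b| + μ * r := by
    simp only [Complex.norm_real, Real.norm_eq_abs]
    rcases le_or_gt 0 b with hb | hb
    · exact ⟨μ, hμmem, by rw [abs_of_nonneg hb, abs_of_nonneg (by positivity), mul_comm]⟩
    · refine ⟨-μ, by exact_mod_cast hnegμmem, ?_⟩
      rw [abs_of_neg hb, abs_of_neg (by nlinarith)]
      ring
  have hw' : ((b + r * w : ℝ) : ℂ) ∈ spectrum ℂ ((tridiag n a b c).map (fun x : ℝ => (x : ℂ))) := by
    rw [hσ]
    exact ⟨_, ⟨w, hw, rfl⟩, by push_cast; rfl⟩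
  refine (specRad_eq_norm_of_mem_spectrum hw' ?_).trans hbw
  rw [hbw, hσ]
  rintro _ ⟨_, ⟨z, hz, rfl⟩, rfl⟩
  calc ‖(b : ℂ) + r • z‖ ≤ ‖(b : ℂ)‖ + r * ‖z‖ := by
        simpa [abs_of_pos hr] using norm_add_le (b : ℂ) ((r : ℂ) * z)
    _ ≤ |b| + μ * r := by
        rw [Complex.norm_real, Real.norm_eq_abs, mul_comm μ]
        gcongr
        exact hmax z hz

theorem StrictConcaveOn.const_add_mul_sqrt {E : Type*} [AddCommGroup E] [Module ℝ E] {s : Set E}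
    {f : E → ℝ} (hf : StrictConcaveOn ℝ s f) (hf₀ : ∀ x ∈ s, 0 ≤ f x) (β : ℝ) {μ : ℝ}
    (hμ : 0 < μ) : StrictConcaveOn ℝ s fun x => β + μ * √(f x) := by
  refine ⟨hf.1, fun x hx y hy hxy a b ha hb hab => ?_⟩
  have hlt := Real.sqrt_lt_sqrt (by have := hf₀ x hx; have := hf₀ y hy; positivity)
    (hf.2 hx hy hxy ha hb hab)
  have hle := Real.strictConcaveOn_sqrt.concaveOn.2 (hf₀ x hx) (hf₀ y hy) ha.le hb.le hab
  simp only [smul_eq_mul] at hlt hle ⊢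
  have hcomb : a * (β + μ * √(f x)) + b * (β + μ * √(f y)) =
      β + μ * (a * √(f x) + b * √(f y)) := by linear_combination β * hab
  linarith [mul_lt_mul_of_pos_left (hle.trans_lt hlt) hμ]

theorem strictMonoOn_const_add_mul_sqrt (β : ℝ) {μ : ℝ} (hμ : 0 < μ) :
    StrictMonoOn (fun y => β + μ * √y) (Ici 0) := fun _ hx _ hy hxy => by
  simpa using mul_lt_mul_of_pos_left (Real.strictMonoOn_sqrt hx hy hxy) hμ

section Quadratic

variable (m : ℝ) {k : ℝ} (hk : 0 < k)
include hk

theorem strictConcaveOn_add_mul_one_sub_mul :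
    StrictConcaveOn ℝ univ fun t : ℝ => m + t * (1 - t) * k := by
  refine ⟨convex_univ, fun x _ y _ hxy p q hp hq hpq => ?_⟩
  obtain rfl : q = 1 - p := by linarith
  have hgap : m + (p * x + (1 - p) * y) * (1 - (p * x + (1 - p) * y)) * k -
      (p * (m + x * (1 - x) * k) + (1 - p) * (m + y * (1 - y) * k)) =
      k * p * (1 - p) * (x - y) ^ 2 := by ring
  have : 0 < k * p * (1 - p) * (x - y) ^ 2 := by
    have := sub_ne_zero.mpr hxy
    positivity
  simp only [smul_eq_mul]
  linarith

theorem strictMonoOn_add_mul_one_sub_mul :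
    StrictMonoOn (fun t : ℝ => m + t * (1 - t) * k) (Iic (1 / 2)) := fun s hs t ht hst => by
  have : 0 < k * (t - s) * (1 - s - t) := mul_pos (mul_pos hk (by linarith))
    (by simp only [mem_Iic] at hs ht; linarith)
  dsimp only
  nlinarith

theorem strictAntiOn_add_mul_one_sub_mul :
    StrictAntiOn (fun t : ℝ => m + t * (1 - t) * k) (Ici (1 / 2)) := fun s hs t ht hst => by
  have : 0 < k * (t - s) * (s + t - 1) := mul_pos (mul_pos hk (by linarith))
    (by simp only [mem_Ici] at hs ht; linarith)
  dsimp only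
  nlinarith

end Quadratic

theorem levinger_tridiagonal_toeplitz_general {n : ℕ} (hn : 2 ≤ n) (a b c : ℝ)
    (ha : 0 ≤ a) (hc : 0 ≤ c)
    (A : Matrix (Fin n) (Fin n) ℝ)
    (hA : ∀ i j : Fin n, A i j =
      if (i:ℕ) = (j:ℕ) then b
      else if (i:ℕ) = (j:ℕ) + 1 then a
      else if (j:ℕ) = (i:ℕ) + 1 then c
      else 0) :
    (ConcaveOn ℝ (Set.Ioo (0:ℝ) 1)
        (fun t : ℝ => specRad ((1 - t) • A + t • Aᵀ)) ∧
      MonotoneOn (fun t : ℝ => specRad ((1 - t) • A + t • Aᵀ))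
        (Set.Ioo (0:ℝ) (1/2)) ∧
      AntitoneOn (fun t : ℝ => specRad ((1 - t) • A + t • Aᵀ))
        (Set.Ioo (1/2:ℝ) 1)) ∧
    (a ≠ c →
      StrictConcaveOn ℝ (Set.Ioo (0:ℝ) 1)
        (fun t : ℝ => specRad ((1 - t) • A + t • Aᵀ)) ∧
      StrictMonoOn (fun t : ℝ => specRad ((1 - t) • A + t • Aᵀ))
        (Set.Ioo (0:ℝ) (1/2)) ∧
      StrictAntiOn (fun t : ℝ => specRad ((1 - t) • A + t • Aᵀ))
        (Set.Ioo (1/2:ℝ) 1)) := by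
  obtain rfl : A = tridiag n a b c := Matrix.ext hA
  rcases eq_or_ne a c with rfl | hac
  · have hconst : (fun t : ℝ => specRad ((1 - t) • tridiag n a b a + t • (tridiag n a b a)ᵀ)) =
        fun _ => specRad (tridiag n a b a) := by
      funext t
      rw [tridiag_transpose, ← add_smul, sub_add_cancel, one_smul]
    rw [hconst]
    exact ⟨⟨concaveOn_const _ (convex_Ioo 0 1), monotoneOn_const, antitoneOn_const⟩,
      fun h => absurd rfl h⟩
  obtain ⟨μ, hμ, hρ⟩ := exists_specRad_tridiag_eq hn
  have hk : 0 < (a - c) ^ 2 := by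
    have := sub_ne_zero.mpr hac
    positivity
  have hq : ∀ t ∈ Ioo (0 : ℝ) 1, 0 < a * c + t * (1 - t) * (a - c) ^ 2 := fun t ht =>
    add_pos_of_nonneg_of_pos (mul_nonneg ha hc) (mul_pos (mul_pos ht.1 (sub_pos.2 ht.2)) hk)
  have hr : EqOn (fun t : ℝ => specRad ((1 - t) • tridiag n a b c + t • (tridiag n a b c)ᵀ))
      (fun t => |b| + μ * √(a * c + t * (1 - t) * (a - c) ^ 2)) (Ioo 0 1) := fun t ht => by
    have hprod : ((1 - t) * a + t * c) * ((1 - t) * c + t * a) =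
        a * c + t * (1 - t) * (a - c) ^ 2 := by ring
    dsimp only
    rw [smul_tridiag_add_smul_transpose (sub_add_cancel 1 t), hρ (hprod ▸ hq t ht), hprod]
  have hconc := ((strictConcaveOn_add_mul_one_sub_mul (a * c) hk).subset (subset_univ _)
    (convex_Ioo 0 1)).const_add_mul_sqrt (fun t ht => (hq t ht).le) |b| hμ
  have hmono := (strictMonoOn_const_add_mul_sqrt |b| hμ).comp
    ((strictMonoOn_add_mul_one_sub_mul (a * c) hk).mono
      (Ioo_subset_Iio_self.trans Iio_subset_Iic_self))
    fun t (ht : t ∈ Ioo 0 (1 / 2)) => (hq t ⟨ht.1, by linarith [ht.2]⟩).le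
  have hanti := (strictMonoOn_const_add_mul_sqrt |b| hμ).comp_strictAntiOn
    ((strictAntiOn_add_mul_one_sub_mul (a * c) hk).mono
      (Ioo_subset_Ioi_self.trans Ioi_subset_Ici_self))
    fun t (ht : t ∈ Ioo (1 / 2) 1) => (hq t ⟨by linarith [ht.1], ht.2⟩).le
  replace hconc := hconc.congr hr.symm
  replace hmono := hmono.congr (hr.symm.mono (Ioo_subset_Ioo_right (by norm_num)))
  replace hanti := hanti.congr (hr.symm.mono (Ioo_subset_Ioo_left (by norm_num)))
  exact ⟨⟨hconc.concaveOn, hmono.monotoneOn, hanti.antitoneOn⟩, fun _ => ⟨hconc, hmono, hanti⟩⟩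

/-- Levinger's function of a nonnegative tridiagonal Toeplitz matrix is concave
on `(0,1)`, increasing on `(0,1/2)` and decreasing on `(1/2,1)`, all strictly
when `a ≠ c`. -/
theorem levinger_tridiagonal_toeplitz {n : ℕ} (hn : 2 ≤ n) (a b c : ℝ)
    (ha : 0 ≤ a) (hb : 0 ≤ b) (hc : 0 ≤ c) (hmax : 0 < max a c)
    (A : Matrix (Fin n) (Fin n) ℝ)
    (hA : ∀ i j : Fin n, A i j =
      if (i:ℕ) = (j:ℕ) then b
      else if (i:ℕ) = (j:ℕ) + 1 then a
      else if (j:ℕ) = (i:ℕ) + 1 then c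
      else 0) :
    (ConcaveOn ℝ (Set.Ioo (0:ℝ) 1)
        (fun t : ℝ => specRad ((1 - t) • A + t • Aᵀ)) ∧
      MonotoneOn (fun t : ℝ => specRad ((1 - t) • A + t • Aᵀ))
        (Set.Ioo (0:ℝ) (1/2)) ∧
      AntitoneOn (fun t : ℝ => specRad ((1 - t) • A + t • Aᵀ))
        (Set.Ioo (1/2:ℝ) 1)) ∧
    (a ≠ c →
      StrictConcaveOn ℝ (Set.Ioo (0:ℝ) 1)
        (fun t : ℝ => specRad ((1 - t) • A + t • Aᵀ)) ∧
      StrictMonoOn (fun t : ℝ => specRad ((1 - t) • A + t • Aᵀ))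
        (Set.Ioo (0:ℝ) (1/2)) ∧
      StrictAntiOn (fun t : ℝ => specRad ((1 - t) • A + t • Aᵀ))
        (Set.Ioo (1/2:ℝ) 1)) :=
  levinger_tridiagonal_toeplitz_general hn a b c ha hc A hA
end

section
/- Let n ≥ 3, u, v, w > 0, and let A ∈ ℝ^{n×n} be the Toeplitz matrix with A_{ii} = w, A_{i,i+1} = u for i = 1,…,n−1, A_{1,n} = u, A_{i+1,i} = v for i = 1,…,n−1, A_{n,1} = v, and all other entries 0. Then Levinger's function r(t) := ρ((1−t)A + tAᵀ) is concave in t on (0,1), strictly concave if u ≠ v. -/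
open Matrix

/-!
Put `x = (1 - t) u + t v` and `y = (1 - t) v + t u`. Then `(1 - t) A + t Aᵀ` has the pattern of `A`
with `u, v` replaced by `x, y`. Writing `x = Xⁿ`, `y = Yⁿ`, the positive vector `((Y / X) ^ i)ᵢ` is
an eigenvector of it for the eigenvalue `w + X ^ (n - 1) Y + X Y ^ (n - 1)`. For a nonnegative
matrix an eigenvalue with a positive eigenvector is the spectral radius: the diagonal similarity by
that vector makes every row sum equal to the eigenvalue, and the row sums bound the spectrum.
Hence `r t = w + x ^ θ y ^ (1 - θ) + y ^ θ x ^ (1 - θ)` with `θ = 1 / n`.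

The weighted geometric mean `a ^ θ b ^ (1 - θ)` is the perspective `b φ (a / b)` of the concave
function `φ = (· ^ θ)`, so it is concave on the quadrant, and strictly concave along every segment
that does not lie on a ray from the origin. For `u ≠ v` the segment from `(u, v)` to `(v, u)` is
such a segment.
-/

open Set
open scoped ENNReal

section SpectralRadius

variable {m : Type*} [Fintype m] [DecidableEq m]

lemma Matrix.mem_spectrum_of_mulVec_eq_smul {R : Type*} [Field R] {M : Matrix m m R} {μ : R}
    {v : m → R} (hv : v ≠ 0) (hMv : M *ᵥ v = μ • v) : μ ∈ spectrum R M := by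
  rw [← Matrix.spectrum_toLin']
  exact (Module.End.hasEigenvalue_of_hasEigenvector
    (Module.End.hasEigenvector_iff.2 ⟨by simpa using hMv, hv⟩)).mem_spectrum

lemma specRad_units_conj (P : (Matrix m m ℝ)ˣ) (M : Matrix m m ℝ) :
    specRad ((P : Matrix m m ℝ) * M * (↑P⁻¹ : Matrix m m ℝ)) = specRad M := by
  let f := (algebraMap ℝ ℂ).mapMatrix (m := m)
  have h := spectrum.units_conjugate (R := ℂ) (a := f M) (u := Units.map f.toMonoidHom P)
  simp only [Units.coe_map, Units.coe_map_inv, RingHom.toMonoidHom_eq_coe,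
    MonoidHom.coe_coe, ← map_mul] at h
  simp only [specRad, spectralRadius]
  exact congrArg (fun s => (⨆ k ∈ s, (‖k‖₊ : ℝ≥0∞)).toReal) h

attribute [local instance] Matrix.linftyOpNormedRing Matrix.linftyOpNormedAlgebra in
lemma specRad_eq_of_rowSum [Nonempty m] {N : Matrix m m ℝ} (hN : ∀ i j, 0 ≤ N i j) {s : ℝ}
    (hs : ∀ i, ∑ j, N i j = s) : specRad N = s := by
  set Nc := N.map (fun x : ℝ => (x : ℂ))
  obtain ⟨i₀⟩ := ‹Nonempty m›
  have hs0 : 0 ≤ s := hs i₀ ▸ Finset.sum_nonneg fun j _ => hN i₀ j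
  have hmem : (s : ℂ) ∈ spectrum ℂ Nc :=
    mem_spectrum_of_mulVec_eq_smul (v := fun _ => 1) (Function.ne_iff.2 ⟨i₀, one_ne_zero⟩) (by
      ext i; simp [Nc, mulVec, dotProduct, ← hs i])
  have hnorm : ‖Nc‖₊ = s.toNNReal := by
    have hrow : ∀ i, ∑ j, ‖Nc i j‖₊ = s.toNNReal := fun i => by
      rw [← hs i, Real.toNNReal_sum_of_nonneg fun j _ => hN i j]
      simp [Nc, Real.nnnorm_of_nonneg (hN i _), Real.toNNReal_of_nonneg (hN i _)]
    simp only [linfty_opNNNorm_def, hrow, Finset.sup_const Finset.univ_nonempty]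
  suffices spectralRadius ℂ Nc = s.toNNReal by simp [specRad, Nc, this, hs0]
  refine le_antisymm (hnorm ▸ spectrum.spectralRadius_le_nnnorm Nc) ?_
  have h := le_iSup₂ (f := fun k (_ : k ∈ spectrum ℂ Nc) => (‖k‖₊ : ℝ≥0∞)) _ hmem
  simpa [spectralRadius, Complex.nnnorm_real, Real.nnnorm_of_nonneg hs0,
    Real.toNNReal_of_nonneg hs0] using h

lemma specRad_eq_of_mulVec_eq_smul [Nonempty m] {N : Matrix m m ℝ} (hN : ∀ i j, 0 ≤ N i j)
    {z : m → ℝ} (hz : ∀ i, 0 < z i) {s : ℝ} (hNz : N *ᵥ z = s • z) : specRad N = s := by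
  have hz0 : ∀ i, z i ≠ 0 := fun i => (hz i).ne'
  let D : (Matrix m m ℝ)ˣ :=
    ⟨diagonal z⁻¹, diagonal z, by simp [diagonal_mul_diagonal, hz0],
      by simp [diagonal_mul_diagonal, hz0]⟩
  rw [← specRad_units_conj D N]
  refine specRad_eq_of_rowSum (fun i j => ?_) (fun i => ?_)
  · simp only [D, Units.inv_mk, diagonal_mul, mul_diagonal, Pi.inv_apply]
    exact mul_nonneg (mul_nonneg (inv_nonneg.2 (hz i).le) (hN i j)) (hz j).le
  · have hi := congrFun hNz i
    simp only [mulVec, dotProduct, Pi.smul_apply, smul_eq_mul] at hi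
    simp only [D, Units.inv_mk, diagonal_mul, mul_diagonal, Pi.inv_apply, mul_assoc,
      ← Finset.mul_sum, hi]
    field_simp [hz0 i]

end SpectralRadius

lemma Fin.sum_univ_ite_val_eq {M : Type*} [AddCommMonoid M] (n m : ℕ) (c : M) :
    (∑ j : Fin n, if (j : ℕ) = m then c else 0) = if m < n then c else 0 := by
  rw [Fin.sum_univ_eq_sum_range (fun j => if j = m then c else 0)]
  simp [Finset.sum_ite_eq']

def fiedlerToeplitz (n : ℕ) (w x y : ℝ) : Matrix (Fin n) (Fin n) ℝ :=
  of fun i j =>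
    if (i:ℕ) = (j:ℕ) then w
    else if (j:ℕ) = (i:ℕ) + 1 then x
    else if (i:ℕ) = 0 ∧ (j:ℕ) = n - 1 then x
    else if (i:ℕ) = (j:ℕ) + 1 then y
    else if (i:ℕ) = n - 1 ∧ (j:ℕ) = 0 then y
    else 0

section FiedlerToeplitz

variable {n : ℕ}

lemma one_sub_smul_fiedlerToeplitz_add_smul_transpose (w x y t : ℝ) :
    (1 - t) • fiedlerToeplitz n w x y + t • (fiedlerToeplitz n w x y)ᵀ =
      fiedlerToeplitz n w ((1 - t) * x + t * y) ((1 - t) * y + t * x) := by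
  ext i j
  simp only [fiedlerToeplitz, Matrix.add_apply, Matrix.smul_apply, transpose_apply, of_apply,
    smul_eq_mul]
  split_ifs <;> first | (exfalso; omega) | ring

lemma fiedlerToeplitz_mulVec (hn : 3 ≤ n) (w x y : ℝ) (f : ℕ → ℝ) (i : Fin n) :
    (fiedlerToeplitz n w x y *ᵥ fun j => f j) i =
      w * f i + (if (i:ℕ) + 1 < n then x * f (i + 1) else 0) +
      (if 0 < (i:ℕ) then y * f (i - 1) else 0) + (if (i:ℕ) = 0 then x * f (n - 1) else 0) +
      (if (i:ℕ) = n - 1 then y * f 0 else 0) := by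
  have hi := i.isLt
  -- for `n ≥ 3` the five cases of the definition are disjoint, so the nested `if` is a sum
  have hrow : ∀ j : Fin n, fiedlerToeplitz n w x y i j * f j =
      (if (j:ℕ) = i then w * f i else 0) + (if (j:ℕ) = i + 1 then x * f (i + 1) else 0) +
        (if 0 < (i:ℕ) then if (j:ℕ) = i - 1 then y * f (i - 1) else 0 else 0) +
        (if (i:ℕ) = 0 then if (j:ℕ) = n - 1 then x * f (n - 1) else 0 else 0) +
        (if (i:ℕ) = n - 1 then if (j:ℕ) = 0 then y * f 0 else 0 else 0) := fun j => by
    have := j.isLt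
    simp only [fiedlerToeplitz, of_apply]
    split_ifs <;> grind
  simp [mulVec, dotProduct, hrow, Finset.sum_add_distrib, Fin.sum_univ_ite_val_eq, hi,
    Nat.sub_lt_of_lt hi, show 0 < n by omega]

lemma fiedlerToeplitz_mulVec_geom (hn : 3 ≤ n) (w : ℝ) {X Y : ℝ} (hX : X ≠ 0) :
    fiedlerToeplitz n w (X ^ n) (Y ^ n) *ᵥ (fun j : Fin n => (Y / X) ^ (j:ℕ)) =
      (w + X ^ (n - 1) * Y + X * Y ^ (n - 1)) • fun j : Fin n => (Y / X) ^ (j:ℕ) := by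
  -- with `Y = ρ X` each row becomes a polynomial identity in `ρ` and `X`
  obtain ⟨ρ, rfl⟩ : ∃ ρ, Y = ρ * X := ⟨Y / X, by field_simp⟩
  obtain ⟨k, rfl⟩ : ∃ k, n = k + 3 := ⟨n - 3, by omega⟩
  ext ⟨i, hi⟩
  rw [fiedlerToeplitz_mulVec hn _ _ _ (fun j => (ρ * X / X) ^ j), mul_div_cancel_right₀ ρ hX]
  simp only [Pi.smul_apply, smul_eq_mul, show k + 3 - 1 = k + 2 by omega]
  rcases Nat.eq_zero_or_pos i with rfl | hi0
  · simp
    ring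
  rcases (show i = k + 2 ∨ i + 1 < k + 3 by omega) with rfl | hi1
  · simp
    ring
  obtain ⟨m, rfl⟩ : ∃ m, i = m + 1 := ⟨i - 1, by omega⟩
  rw [if_pos hi1, if_pos hi0, if_neg (by omega), if_neg (by omega)]
  simp
  ring

lemma specRad_fiedlerToeplitz (hn : 3 ≤ n) {w x y : ℝ} (hw : 0 ≤ w) (hx : 0 < x) (hy : 0 < y) :
    specRad (fiedlerToeplitz n w x y) =
      w + x ^ (n : ℝ)⁻¹ * y ^ (1 - (n : ℝ)⁻¹) + y ^ (n : ℝ)⁻¹ * x ^ (1 - (n : ℝ)⁻¹) := by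
  have hn0 : n ≠ 0 := by omega
  have hpow : ∀ a : ℝ, 0 < a → (a ^ (n : ℝ)⁻¹) ^ (n - 1) = a ^ (1 - (n : ℝ)⁻¹) := fun a ha => by
    rw [← Real.rpow_natCast, ← Real.rpow_mul ha.le, Nat.cast_sub (by omega), Nat.cast_one]
    congr 1
    field_simp
  have : Nonempty (Fin n) := ⟨⟨0, by omega⟩⟩
  have hT : ∀ i j, 0 ≤ fiedlerToeplitz n w x y i j := fun i j => by
    simp only [fiedlerToeplitz, of_apply]
    split_ifs <;> positivity
  have h := fiedlerToeplitz_mulVec_geom hn w (X := x ^ (n : ℝ)⁻¹) (Y := y ^ (n : ℝ)⁻¹)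
    (by positivity)
  rw [Real.rpow_inv_natCast_pow hx.le hn0, Real.rpow_inv_natCast_pow hy.le hn0, hpow x hx,
    hpow y hy] at h
  rw [specRad_eq_of_mulVec_eq_smul hT (fun i => by positivity) h]
  ring

end FiedlerToeplitz

noncomputable def perspective (φ : ℝ → ℝ) (p : ℝ × ℝ) : ℝ := p.2 * φ (p.1 / p.2)

lemma perspective_rpow (θ : ℝ) {a b : ℝ} (ha : 0 ≤ a) (hb : 0 < b) :
    perspective (· ^ θ) (a, b) = a ^ θ * b ^ (1 - θ) := by
  simp only [perspective, Real.div_rpow ha hb.le, Real.rpow_sub hb, Real.rpow_one]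
  field_simp

lemma concaveOn_perspective {φ : ℝ → ℝ} (hφ : ConcaveOn ℝ (Ici 0) φ) :
    ConcaveOn ℝ (Ici 0 ×ˢ Ioi 0) (perspective φ) := by
  refine ⟨(convex_Ici 0).prod (convex_Ioi 0), ?_⟩
  rintro ⟨a₁, b₁⟩ ⟨ha₁ : 0 ≤ a₁, hb₁ : 0 < b₁⟩ ⟨a₂, b₂⟩ ⟨ha₂ : 0 ≤ a₂, hb₂ : 0 < b₂⟩ s t hs ht hst
  simp only [perspective, Prod.smul_mk, Prod.mk_add_mk, smul_eq_mul]
  set B := s * b₁ + t * b₂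
  have hB : 0 < B := by
    rcases hs.eq_or_lt with rfl | hs
    · simp_all [B]
    · positivity
  have key := hφ.2 (show a₁ / b₁ ∈ Ici 0 by simp; positivity)
    (show a₂ / b₂ ∈ Ici 0 by simp; positivity)
    (show 0 ≤ s * b₁ / B by positivity) (show 0 ≤ t * b₂ / B by positivity)
    (by rw [← add_div, div_self hB.ne'])
  simp only [smul_eq_mul] at key
  calc s * (b₁ * φ (a₁ / b₁)) + t * (b₂ * φ (a₂ / b₂))
      = B * (s * b₁ / B * φ (a₁ / b₁) + t * b₂ / B * φ (a₂ / b₂)) := by field_simp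
    _ ≤ B * φ (s * b₁ / B * (a₁ / b₁) + t * b₂ / B * (a₂ / b₂)) :=
        mul_le_mul_of_nonneg_left key hB.le
    _ = B * φ ((s * a₁ + t * a₂) / B) := by congr 2; field_simp

lemma perspective_lt_of_strictConcaveOn {φ : ℝ → ℝ} (hφ : StrictConcaveOn ℝ (Ici 0) φ)
    {p q : ℝ × ℝ} (hp : p ∈ Ici 0 ×ˢ Ioi 0) (hq : q ∈ Ici 0 ×ˢ Ioi 0)
    (hpq : p.1 * q.2 ≠ q.1 * p.2) {s t : ℝ} (hs : 0 < s) (ht : 0 < t) :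
    s * perspective φ p + t * perspective φ q < perspective φ (s • p + t • q) := by
  obtain ⟨a₁, b₁⟩ := p
  obtain ⟨a₂, b₂⟩ := q
  obtain ⟨ha₁ : 0 ≤ a₁, hb₁ : 0 < b₁⟩ := hp
  obtain ⟨ha₂ : 0 ≤ a₂, hb₂ : 0 < b₂⟩ := hq
  simp only [perspective, Prod.smul_mk, Prod.mk_add_mk, smul_eq_mul]
  set B := s * b₁ + t * b₂
  have hB : 0 < B := by positivity
  have key := hφ.2 (show a₁ / b₁ ∈ Ici 0 by simp; positivity)
    (show a₂ / b₂ ∈ Ici 0 by simp; positivity)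
    (by rwa [Ne, div_eq_div_iff hb₁.ne' hb₂.ne'])
    (show 0 < s * b₁ / B by positivity) (show 0 < t * b₂ / B by positivity)
    (by rw [← add_div, div_self hB.ne'])
  simp only [smul_eq_mul] at key
  calc s * (b₁ * φ (a₁ / b₁)) + t * (b₂ * φ (a₂ / b₂))
      = B * (s * b₁ / B * φ (a₁ / b₁) + t * b₂ / B * φ (a₂ / b₂)) := by field_simp
    _ < B * φ (s * b₁ / B * (a₁ / b₁) + t * b₂ / B * (a₂ / b₂)) :=
        mul_lt_mul_of_pos_left key hB
    _ = B * φ ((s * a₁ + t * a₂) / B) := by congr 2; field_simp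

lemma strictConcaveOn_perspective_lineMap {φ : ℝ → ℝ} (hφ : StrictConcaveOn ℝ (Ici 0) φ)
    {p q : ℝ × ℝ} (hp : p ∈ Ici 0 ×ˢ Ioi 0) (hq : q ∈ Ici 0 ×ˢ Ioi 0)
    (hpq : p.1 * q.2 ≠ q.1 * p.2) :
    StrictConcaveOn ℝ (Icc (0:ℝ) 1) fun t => perspective φ (AffineMap.lineMap p q t) := by
  set L : ℝ →ᵃ[ℝ] ℝ × ℝ := AffineMap.lineMap p q
  refine ⟨convex_Icc 0 1, fun t₁ ht₁ t₂ ht₂ hne s t hs ht hst => ?_⟩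
  have hL : ∀ τ ∈ Icc (0:ℝ) 1, L τ ∈ Ici 0 ×ˢ Ioi 0 := fun _ hτ =>
    ((convex_Ici 0).prod (convex_Ioi 0)).lineMap_mem hp hq hτ
  have hdet : (L t₁).1 * (L t₂).2 - (L t₂).1 * (L t₁).2 = (t₂ - t₁) * (p.1 * q.2 - q.1 * p.2) := by
    simp only [L, AffineMap.lineMap_apply_module, Prod.fst_add, Prod.snd_add, Prod.smul_fst,
      Prod.smul_snd, smul_eq_mul]
    ring
  have hcombo : L (s * t₁ + t * t₂) = s • L t₁ + t • L t₂ := Convex.combo_affine_apply hst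
  simp only [smul_eq_mul, hcombo]
  refine perspective_lt_of_strictConcaveOn hφ (hL t₁ ht₁) (hL t₂ ht₂) (sub_ne_zero.1 ?_) hs ht
  rw [hdet]
  exact mul_ne_zero (sub_ne_zero.2 hne.symm) (sub_ne_zero.2 hpq)

lemma concaveOn_perspective_lineMap {φ : ℝ → ℝ} (hφ : ConcaveOn ℝ (Ici 0) φ)
    {p q : ℝ × ℝ} (hp : p ∈ Ici 0 ×ˢ Ioi 0) (hq : q ∈ Ici 0 ×ˢ Ioi 0) :
    ConcaveOn ℝ (Icc (0:ℝ) 1) fun t => perspective φ (AffineMap.lineMap p q t) :=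
  ((concaveOn_perspective hφ).comp_affineMap (AffineMap.lineMap p q)).subset
    (fun _ ht => ((convex_Ici 0).prod (convex_Ioi 0)).lineMap_mem hp hq ht) (convex_Icc 0 1)

noncomputable def levinger {n : ℕ} (A : Matrix (Fin n) (Fin n) ℝ) (t : ℝ) : ℝ :=
  specRad ((1 - t) • A + t • Aᵀ)

lemma levinger_fiedlerToeplitz {n : ℕ} (hn : 3 ≤ n) {u v w : ℝ} (hu : 0 < u) (hv : 0 < v)
    (hw : 0 ≤ w) {t : ℝ} (ht : t ∈ Icc (0:ℝ) 1) :
    levinger (fiedlerToeplitz n w u v) t =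
      w + (perspective (· ^ (n : ℝ)⁻¹) (AffineMap.lineMap (u, v) (v, u) t) +
        perspective (· ^ (n : ℝ)⁻¹) (AffineMap.lineMap (v, u) (u, v) t)) := by
  obtain ⟨ht0, ht1⟩ := ht
  have hpos : ∀ {a b : ℝ}, 0 < a → 0 < b → 0 < (1 - t) * a + t * b := fun ha hb => by
    nlinarith [mul_nonneg ht0 ha.le, mul_nonneg ht0 hb.le, mul_nonneg (sub_nonneg.2 ht1) ha.le,
      mul_nonneg (sub_nonneg.2 ht1) hb.le]
  have hx := hpos hu hv
  have hy := hpos hv hu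
  simp only [levinger, AffineMap.lineMap_apply_module, Prod.smul_mk, Prod.mk_add_mk, smul_eq_mul]
  rw [one_sub_smul_fiedlerToeplitz_add_smul_transpose, specRad_fiedlerToeplitz hn hw hx hy,
    perspective_rpow _ hx.le hy, perspective_rpow _ hy.le hx, add_assoc]

/-- Levinger's function of Fiedler's 3-parameter Toeplitz matrix (with
`u, v, w > 0`) is concave on `(0,1)`, strictly if `u ≠ v`. -/
theorem levinger_fiedler_toeplitz_concave {n : ℕ} (hn : 3 ≤ n) (u v w : ℝ)
    (hu : 0 < u) (hv : 0 < v) (hw : 0 < w)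
    (A : Matrix (Fin n) (Fin n) ℝ)
    (hA : ∀ i j : Fin n, A i j =
      if (i:ℕ) = (j:ℕ) then w
      else if (j:ℕ) = (i:ℕ) + 1 then u
      else if (i:ℕ) = 0 ∧ (j:ℕ) = n - 1 then u
      else if (i:ℕ) = (j:ℕ) + 1 then v
      else if (i:ℕ) = n - 1 ∧ (j:ℕ) = 0 then v
      else 0) :
    ConcaveOn ℝ (Set.Ioo (0:ℝ) 1)
      (fun t : ℝ => specRad ((1 - t) • A + t • Aᵀ)) ∧
    (u ≠ v →
      StrictConcaveOn ℝ (Set.Ioo (0:ℝ) 1)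
        (fun t : ℝ => specRad ((1 - t) • A + t • Aᵀ))) := by
  obtain rfl : A = fiedlerToeplitz n w u v := Matrix.ext hA
  have hφ : StrictConcaveOn ℝ (Ici 0) fun x : ℝ => x ^ (n : ℝ)⁻¹ :=
    Real.strictConcaveOn_rpow (by positivity) (inv_lt_one_of_one_lt₀ (by norm_cast; omega))
  have huv : (u, v) ∈ Ici (0:ℝ) ×ˢ Ioi 0 := ⟨mem_Ici.2 hu.le, hv⟩
  have hvu : (v, u) ∈ Ici (0:ℝ) ×ˢ Ioi 0 := ⟨mem_Ici.2 hv.le, hu⟩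
  have hr : EqOn _ (levinger (fiedlerToeplitz n w u v)) (Icc 0 1) := fun t ht =>
    (levinger_fiedlerToeplitz hn hu hv hw.le ht).symm
  have hconst := concaveOn_const (𝕜 := ℝ) w (convex_Icc (0:ℝ) 1)
  have h₂ := concaveOn_perspective_lineMap hφ.concaveOn hvu huv
  refine ⟨((hconst.add ((concaveOn_perspective_lineMap hφ.concaveOn huv hvu).add h₂)).congr
    hr).subset Ioo_subset_Icc_self (convex_Ioo 0 1), fun hne => ?_⟩
  have h₁ := strictConcaveOn_perspective_lineMap hφ huv hvu
    fun h => hne ((mul_self_inj hu.le hv.le).1 h)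
  exact ((hconst.add_strictConcaveOn (h₁.add_concaveOn h₂)).congr hr).subset
    Ioo_subset_Icc_self (convex_Ioo 0 1)
end

section
/- Let n ≥ 2 and let A ∈ ℝ^{n×n} be a nonnegative cyclic weighted shift matrix with weights c₁,…,c_n ≥ 0: A_{i, (i mod n)+1} = c_i for i = 1,…,n and all other entries 0. If at least one weight is zero and at least one weight is positive, then Levinger's function r(t) := ρ((1−t)A + tAᵀ) is strictly concave on t ∈ (0,1). -/
open Matrix

/-!
A zero weight cuts the cycle of the shift into a path, so the indices admit a level function
`p` with `p j = p i + 1` whenever `A i j ≠ 0`. Conjugating by `diag (u ^ p i)` multiplies `A` by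
`u⁻¹` and `Aᵀ` by `u`; with `u = √(t / (1 - t))` this shows that `(1 - t) • A + t • Aᵀ` is similar
to `√(t (1 - t)) • (A + Aᵀ)`. Hence `r t = √(t (1 - t)) · ρ(A + Aᵀ)`, a positive multiple of a
strictly concave function: `ρ(A + Aᵀ)` is the operator norm of the nonzero symmetric `A + Aᵀ`.
-/

open Set

section SpectralRadius

variable {m : Type*} [Fintype m] [DecidableEq m]

theorem specRad_mul_mul_of_mul_eq_one {P Q : Matrix m m ℝ} (hPQ : P * Q = 1) (M : Matrix m m ℝ) :
    specRad (P * M * Q) = specRad M := by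
  let U : (Matrix m m ℂ)ˣ :=
    Units.map Complex.ofRealHom.mapMatrix.toMonoidHom ⟨P, Q, hPQ, mul_eq_one_comm.1 hPQ⟩
  have hconj : (P * M * Q).map (fun x : ℝ => (x : ℂ)) =
      (U : Matrix m m ℂ) * M.map (fun x : ℝ => (x : ℂ)) * (↑U⁻¹ : Matrix m m ℂ) := by
    change Complex.ofRealHom.mapMatrix (P * M * Q) = Complex.ofRealHom.mapMatrix P *
      Complex.ofRealHom.mapMatrix M * Complex.ofRealHom.mapMatrix Q
    rw [map_mul, map_mul]
  unfold specRad
  rw [hconj, spectralRadius, spectrum.units_conjugate]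
  rfl

open scoped Matrix.Norms.L2Operator in
theorem specRad_eq_norm_of_isSymm {M : Matrix m m ℝ} (hM : M.IsSymm) :
    specRad M = ‖M.map (fun x : ℝ => (x : ℂ))‖ := by
  refine IsSelfAdjoint.toReal_spectralRadius_complex_eq_norm ?_
  ext i j
  simp [hM.apply i j]

open scoped Matrix.Norms.L2Operator in
theorem specRad_smul_of_isSymm {M : Matrix m m ℝ} (hM : M.IsSymm) (r : ℝ) :
    specRad (r • M) = |r| * specRad M := by
  rw [specRad_eq_norm_of_isSymm (hM.smul r), specRad_eq_norm_of_isSymm hM,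
    ← Real.norm_eq_abs, ← Complex.norm_real, ← norm_smul]
  congr 1
  ext i j
  simp

open scoped Matrix.Norms.L2Operator in
theorem specRad_pos_of_isSymm {M : Matrix m m ℝ} (hM : M.IsSymm) (h0 : M ≠ 0) :
    0 < specRad M := by
  rw [specRad_eq_norm_of_isSymm hM, norm_pos_iff]
  contrapose! h0
  ext i j
  simpa using congr_fun₂ h0 i j

theorem diagonal_zpow_mul_mul_diagonal_inv {A : Matrix m m ℝ} {p : m → ℤ}
    (hp : ∀ i j, A i j ≠ 0 → p j = p i + 1) {u : ℝ} (hu : u ≠ 0) (a b : ℝ) :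
    diagonal (fun i => u ^ p i) * (a • A + b • Aᵀ) * diagonal (fun i => (u ^ p i)⁻¹) =
      (a / u) • A + (b * u) • Aᵀ := by
  have hpow : ∀ i j, A i j ≠ 0 → u ^ p j = u ^ p i * u := fun i j h => by
    rw [hp i j h, zpow_add_one₀ hu]
  ext i j
  have forward : u ^ p i * A i j * (u ^ p j)⁻¹ = A i j / u := by
    by_cases h : A i j = 0
    · simp [h]
    · rw [hpow i j h]
      field_simp
  have backward : u ^ p i * A j i * (u ^ p j)⁻¹ = A j i * u := by
    by_cases h : A j i = 0
    · simp [h]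
    · rw [hpow j i h]
      field_simp
  simp only [diagonal_mul, mul_diagonal, Matrix.add_apply, Matrix.smul_apply, transpose_apply,
    smul_eq_mul]
  linear_combination a * forward + b * backward

theorem specRad_levinger_eq_of_level {A : Matrix m m ℝ} {p : m → ℤ}
    (hp : ∀ i j, A i j ≠ 0 → p j = p i + 1) {t : ℝ} (ht : t ∈ Ioo 0 1) :
    specRad ((1 - t) • A + t • Aᵀ) = √(t * (1 - t)) * specRad (A + Aᵀ) := by
  obtain ⟨ht0, ht1⟩ := ht
  set α := √t
  set β := √(1 - t)
  have hα : α ^ 2 = t := Real.sq_sqrt ht0.le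
  have hβ : β ^ 2 = 1 - t := Real.sq_sqrt (by linarith)
  have hα0 : α ≠ 0 := (Real.sqrt_pos.2 ht0).ne'
  have hβ0 : β ≠ 0 := (Real.sqrt_pos.2 (by linarith)).ne'
  have hu : α / β ≠ 0 := div_ne_zero hα0 hβ0
  have hdiag : diagonal (fun i => (α / β) ^ p i) * diagonal (fun i => ((α / β) ^ p i)⁻¹) = 1 := by
    rw [diagonal_mul_diagonal, ← diagonal_one]
    exact congrArg diagonal (funext fun i => mul_inv_cancel₀ (zpow_ne_zero _ hu))
  have hsim := diagonal_zpow_mul_mul_diagonal_inv hp hu (α * β) (α * β)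
  rw [show α * β / (α / β) = 1 - t by field_simp; linarith,
    show α * β * (α / β) = t by field_simp; linarith, ← smul_add] at hsim
  rw [← hsim, specRad_mul_mul_of_mul_eq_one hdiag,
    specRad_smul_of_isSymm (isSymm_add_transpose_self A), Real.sqrt_mul ht0.le,
    abs_of_nonneg (by positivity)]

end SpectralRadius

theorem StrictConcaveOn.mul_const {E : Type*} [AddCommMonoid E] [Module ℝ E] {s : Set E}
    {f : E → ℝ} (hf : StrictConcaveOn ℝ s f) {c : ℝ} (hc : 0 < c) :
    StrictConcaveOn ℝ s (fun x => f x * c) :=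
  ⟨hf.1, fun x hx y hy hxy a b ha hb hab => by
    simpa only [smul_eq_mul, add_mul, mul_assoc] using
      mul_lt_mul_of_pos_right (hf.2 hx hy hxy ha hb hab) hc⟩

theorem strictConcaveOn_sqrt_mul_one_sub :
    StrictConcaveOn ℝ (Ioo 0 1) (fun t : ℝ => √(t * (1 - t))) := by
  have hquad : StrictConcaveOn ℝ (Ioo 0 1) (fun t : ℝ => t * (1 - t)) := by
    refine ((concaveOn_id convex_univ).sub_strictConvexOn
      (Even.strictConvexOn_pow even_two two_ne_zero)).subset (subset_univ _) (convex_Ioo 0 1)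
      |>.congr fun t _ => ?_
    simp only [Pi.sub_apply, id]
    ring
  refine ⟨convex_Ioo 0 1, fun x hx y hy hxy a b ha hb hab => ?_⟩
  have hnonneg : ∀ t ∈ Ioo (0 : ℝ) 1, 0 ≤ t * (1 - t) := fun t ht =>
    mul_nonneg ht.1.le (sub_nonneg.2 ht.2.le)
  calc a • √(x * (1 - x)) + b • √(y * (1 - y))
      ≤ √(a • (x * (1 - x)) + b • (y * (1 - y))) :=
        Real.strictConcaveOn_sqrt.concaveOn.2 (hnonneg x hx) (hnonneg y hy) ha.le hb.le hab
    _ < √((a • x + b • y) * (1 - (a • x + b • y))) :=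
        Real.sqrt_lt_sqrt
          (add_nonneg (smul_nonneg ha.le (hnonneg x hx)) (smul_nonneg hb.le (hnonneg y hy)))
          (hquad.2 hx hy hxy ha hb hab)

section CyclicShift

variable {n : ℕ} [NeZero n] {c : Fin n → ℝ} {A : Matrix (Fin n) (Fin n) ℝ}

theorem val_eq_succ_mod_iff {i j : Fin n} : (j : ℕ) = ((i : ℕ) + 1) % n ↔ j = i + 1 := by
  rw [Fin.ext_iff, Fin.val_add, Fin.val_one', Nat.add_mod_mod]

variable (hA : ∀ i j : Fin n, A i j = if (j : ℕ) = ((i : ℕ) + 1) % n then c i else 0)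
include hA

theorem cyclicShift_apply : ∀ i j, A i j = if j = i + 1 then c i else 0 := by
  simpa only [val_eq_succ_mod_iff] using hA

theorem exists_level_of_cyclicShift {z : Fin n} (hz : c z = 0) :
    ∃ p : Fin n → ℤ, ∀ i j, A i j ≠ 0 → p j = p i + 1 := by
  refine ⟨fun i => ((i - z - 1 : Fin n) : ℕ), fun i j hij => ?_⟩
  rw [cyclicShift_apply hA] at hij
  obtain ⟨rfl, hci⟩ : j = i + 1 ∧ c i ≠ 0 := by
    split_ifs at hij with hj
    exacts [⟨hj, hij⟩, absurd rfl hij]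
  have hiz : i - z ≠ 0 := sub_ne_zero.2 (by rintro rfl; exact hci hz)
  have hpos : 0 < ((i - z : Fin n) : ℕ) := Nat.pos_of_ne_zero (Fin.val_ne_zero_iff.2 hiz)
  dsimp only
  rw [show i + 1 - z - 1 = i - z by abel, Fin.val_sub_one_of_ne_zero hiz]
  omega

theorem add_transpose_ne_zero_of_cyclicShift (hc : ∀ i, 0 ≤ c i) (hpos : ∃ i, 0 < c i) :
    A + Aᵀ ≠ 0 := by
  obtain ⟨i, hi⟩ := hpos
  have hA0 : ∀ k l, 0 ≤ A k l := fun k l => by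
    rw [hA]
    split_ifs
    exacts [hc k, le_rfl]
  intro h
  have := congr_fun₂ h i (i + 1)
  rw [Matrix.add_apply, transpose_apply, Matrix.zero_apply, cyclicShift_apply hA,
    if_pos rfl] at this
  linarith [hA0 (i + 1) i]

end CyclicShift

theorem levinger_cyclic_shift_zero_weight_strictConcave_general {n : ℕ}
    (c : Fin n → ℝ) (hc : ∀ i, 0 ≤ c i)
    (A : Matrix (Fin n) (Fin n) ℝ)
    (hA : ∀ i j : Fin n, A i j = if (j:ℕ) = ((i:ℕ) + 1) % n then c i else 0)
    (hzero : ∃ i, c i = 0) (hpos : ∃ i, 0 < c i) :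
    StrictConcaveOn ℝ (Set.Ioo (0:ℝ) 1)
      (fun t : ℝ => specRad ((1 - t) • A + t • Aᵀ)) := by
  obtain ⟨z, hz⟩ := hzero
  have : NeZero n := ⟨Fin.pos_iff_nonempty.2 ⟨z⟩ |>.ne'⟩
  obtain ⟨p, hp⟩ := exists_level_of_cyclicShift hA hz
  have hK : 0 < specRad (A + Aᵀ) := specRad_pos_of_isSymm (isSymm_add_transpose_self A)
    (add_transpose_ne_zero_of_cyclicShift hA hc hpos)
  exact (strictConcaveOn_sqrt_mul_one_sub.mul_const hK).congr fun t ht =>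
    (specRad_levinger_eq_of_level hp ht).symm

/-- If a nonnegative cyclic weighted shift matrix has at least one zero weight
and at least one positive weight, then its Levinger function is strictly
concave on `(0,1)`.  (Indices are 0-based: entry `(i, (i+1) mod n)` carries
weight `c i`.) -/
theorem levinger_cyclic_shift_zero_weight_strictConcave {n : ℕ} (hn : 2 ≤ n)
    (c : Fin n → ℝ) (hc : ∀ i, 0 ≤ c i)
    (A : Matrix (Fin n) (Fin n) ℝ)
    (hA : ∀ i j : Fin n, A i j = if (j:ℕ) = ((i:ℕ) + 1) % n then c i else 0)
    (hzero : ∃ i, c i = 0) (hpos : ∃ i, 0 < c i) :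
    StrictConcaveOn ℝ (Set.Ioo (0:ℝ) 1)
      (fun t : ℝ => specRad ((1 - t) • A + t • Aᵀ)) :=
  levinger_cyclic_shift_zero_weight_strictConcave_general c hc A hA hzero hpos
end

section
/- Let A ∈ ℝ^{n×n} be irreducible and nonnegative. Then t ↦ ρ((1−t)A + tAᵀ) is constant on [0,1] if and only if the Perron vector x of A + Aᵀ (the positive eigenvector corresponding to the spectral radius of A + Aᵀ) satisfies (A − Aᵀ)x = 0, i.e., x lies in the null space of A − Aᵀ. -/
/-!
Write `S = A + Aᵀ` and `ρ = ρ(S)`. A nonnegative matrix with a positive eigenvector has the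
corresponding eigenvalue as spectral radius (Collatz–Wielandt). So if `Ax = Aᵀx`, then `x` is a
positive eigenvector of every `(1 - t)A + tAᵀ`, always for `ρ/2`.

Conversely, if Levinger's function is constant then `ρ(A) = ρ(S/2) = ρ/2`. For an eigenvector `v`
of `A` with eigenvalue of modulus `ρ/2`, the vector `u = |v|` satisfies `Au ≥ (ρ/2)u`, hence
`uᵀSu ≥ ρ uᵀu`. Since `ρ` is the largest eigenvalue of the symmetric matrix `S`, `u` is a
`ρ`-eigenvector of `S`, so by irreducibility a positive multiple of `x`. Thus `Ax ≥ (ρ/2)x`,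
likewise `Aᵀx ≥ (ρ/2)x`, and as the two sum to `ρx` both are equalities.
-/

open Matrix

section

variable {m : Type*} [Fintype m]

theorem norm_smul_le_mulVec_norm {𝕜 : Type*} [RCLike 𝕜] {B : Matrix m m ℝ}
    (hB : ∀ i j, 0 ≤ B i j) {μ : 𝕜} {v : m → 𝕜} (hv : B.map (algebraMap ℝ 𝕜) *ᵥ v = μ • v) :
    ‖μ‖ • (fun i => ‖v i‖) ≤ B *ᵥ fun i => ‖v i‖ := by
  intro i
  calc ‖μ‖ * ‖v i‖ = ‖∑ j, (B i j : 𝕜) * v j‖ := by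
        rw [← norm_mul, ← smul_eq_mul, ← Pi.smul_apply μ v i, ← hv]; rfl
    _ ≤ ∑ j, B i j * ‖v j‖ := by
        refine (norm_sum_le _ _).trans (Finset.sum_le_sum fun j _ => ?_)
        rw [norm_mul, RCLike.norm_ofReal, abs_of_nonneg (hB i j)]

theorem le_of_smul_le_mulVec {B : Matrix m m ℝ} (hB : ∀ i j, 0 ≤ B i j) {x : m → ℝ}
    (hx : ∀ i, 0 < x i) {lam : ℝ} (hBx : B *ᵥ x = lam • x) {u : m → ℝ} (hu : 0 ≤ u)
    (hu0 : u ≠ 0) {r : ℝ} (hr : r • u ≤ B *ᵥ u) : r ≤ lam := by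
  obtain ⟨j, hj⟩ : ∃ j, 0 < u j := by
    by_contra! h
    exact hu0 (funext fun i => le_antisymm (h i) (hu i))
  obtain ⟨i, -, hi⟩ := Finset.exists_max_image Finset.univ (fun k => u k / x k)
    ⟨j, Finset.mem_univ j⟩
  have hle : u ≤ (u i / x i) • x := fun k => by
    have := hi k (Finset.mem_univ k)
    rw [div_le_div_iff₀ (hx k) (hx i)] at this
    simp only [Pi.smul_apply, smul_eq_mul, div_mul_eq_mul_div, le_div_iff₀ (hx i)]
    linarith
  have hui : 0 < u i := (div_pos_iff_of_pos_right (hx i)).mp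
    ((div_pos hj (hx j)).trans_le (hi j (Finset.mem_univ j)))
  have : r * u i ≤ lam * u i := calc
    r * u i ≤ (B *ᵥ u) i := hr i
    _ ≤ (B *ᵥ ((u i / x i) • x)) i := dotProduct_le_dotProduct_of_nonneg_left hle (hB i)
    _ = lam * u i := by
      rw [mulVec_smul, hBx, smul_smul]; simp only [Pi.smul_apply, smul_eq_mul]
      field_simp [(hx i).ne']
  exact le_of_mul_le_mul_right this hui

theorem norm_le_of_pos_eigenvector {𝕜 : Type*} [RCLike 𝕜] {B : Matrix m m ℝ}
    (hB : ∀ i j, 0 ≤ B i j) {x : m → ℝ} (hx : ∀ i, 0 < x i) {lam : ℝ} (hBx : B *ᵥ x = lam • x)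
    {μ : 𝕜} {v : m → 𝕜} (hv0 : v ≠ 0) (hv : B.map (algebraMap ℝ 𝕜) *ᵥ v = μ • v) :
    ‖μ‖ ≤ lam :=
  le_of_smul_le_mulVec hB hx hBx (fun i => norm_nonneg (v i))
    (fun h => hv0 (funext fun i => norm_eq_zero.mp (congrFun h i)))
    (norm_smul_le_mulVec_norm hB hv)

theorem mulVec_eq_half_smul_of_sub_mulVec_eq_zero {A : Matrix m m ℝ} {x : m → ℝ} {ρ : ℝ}
    (hev : (A + Aᵀ) *ᵥ x = ρ • x) (h : (A - Aᵀ) *ᵥ x = 0) :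
    A *ᵥ x = (ρ / 2) • x ∧ Aᵀ *ᵥ x = (ρ / 2) • x := by
  rw [sub_mulVec, sub_eq_zero] at h
  have hAx : A *ᵥ x = (ρ / 2) • x := by
    funext i
    have := congrFun hev i
    simp only [add_mulVec, ← h, Pi.add_apply, Pi.smul_apply, smul_eq_mul] at this ⊢
    linarith
  exact ⟨hAx, h ▸ hAx⟩

variable [DecidableEq m]

theorem mem_spectrum_iff_exists_mulVec_eq_smul {K : Type*} [Field K] {N : Matrix m m K} {μ : K} :
    μ ∈ spectrum K N ↔ ∃ v, v ≠ 0 ∧ N *ᵥ v = μ • v := by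
  rw [← spectrum_toLin', ← Module.End.hasEigenvalue_iff_mem_spectrum]
  constructor
  · intro h
    obtain ⟨v, hv, hv0⟩ := h.exists_hasEigenvector
    exact ⟨v, hv0, by simpa using Module.End.mem_eigenspace_iff.mp hv⟩
  · rintro ⟨v, hv0, hv⟩
    exact Module.End.hasEigenvalue_of_hasEigenvector
      ⟨Module.End.mem_eigenspace_iff.mpr (by simpa using hv), hv0⟩

-- Any Banach algebra norm on matrices will do: the spectrum is defined algebraically.
open scoped Matrix.Norms.Operator in
theorem isGreatest_norm_spectrum_specRad [Nonempty m] (M : Matrix m m ℝ) :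
    IsGreatest (norm '' spectrum ℂ (M.map (algebraMap ℝ ℂ))) (specRad M) := by
  obtain ⟨μ, hμ, h⟩ := spectrum.exists_nnnorm_eq_spectralRadius (M.map (algebraMap ℝ ℂ))
  have hμM : ‖μ‖ = specRad M := by
    rw [specRad, ← coe_nnnorm, ← ENNReal.coe_toReal]; exact congrArg ENNReal.toReal h
  refine ⟨⟨μ, hμ, hμM⟩, ?_⟩
  rintro _ ⟨ν, hν, rfl⟩
  rw [← hμM, ← coe_nnnorm, ← coe_nnnorm, NNReal.coe_le_coe, ← ENNReal.coe_le_coe, h]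
  exact le_iSup₂ (α := ENNReal) ν hν

theorem specRad_eq_of_pos_eigenvector [Nonempty m] {B : Matrix m m ℝ} (hB : ∀ i j, 0 ≤ B i j)
    {x : m → ℝ} (hx : ∀ i, 0 < x i) {lam : ℝ} (hBx : B *ᵥ x = lam • x) : specRad B = lam := by
  obtain ⟨⟨μ, hμ, hμB⟩, hmax⟩ := isGreatest_norm_spectrum_specRad B
  obtain ⟨v, hv0, hv⟩ := mem_spectrum_iff_exists_mulVec_eq_smul.mp hμ
  have hlam : (lam : ℂ) ∈ spectrum ℂ (B.map (algebraMap ℝ ℂ)) := by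
    refine mem_spectrum_iff_exists_mulVec_eq_smul.mpr ⟨algebraMap ℝ ℂ ∘ x, fun h => ?_, ?_⟩
    · exact (hx (Classical.arbitrary m)).ne' (by simpa using congrFun h (Classical.arbitrary m))
    · funext i
      simpa [hBx] using ((algebraMap ℝ ℂ).map_mulVec B x i).symm
  have hlamB : |lam| ≤ specRad B := by
    simpa using hmax ⟨_, hlam, rfl⟩
  have hBlam : specRad B ≤ lam := hμB ▸ norm_le_of_pos_eigenvector hB hx hBx hv0 hv
  linarith [le_abs_self lam]

theorem pow_apply_le_pow_apply {A B : Matrix m m ℝ} (hA : ∀ i j, 0 ≤ A i j)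
    (hAB : ∀ i j, A i j ≤ B i j) (k : ℕ) (i j : m) : (A ^ k) i j ≤ (B ^ k) i j := by
  induction k generalizing j with
  | zero => rfl
  | succ k ih =>
    rw [pow_succ, pow_succ, mul_apply, mul_apply]
    exact Finset.sum_le_sum fun l _ =>
      mul_le_mul (ih l) (hAB l j) (hA l j) ((Matrix.pow_apply_nonneg hA k i l).trans (ih l))

theorem Irred.mono {A B : Matrix m m ℝ} (hA : Irred A) (hA0 : ∀ i j, 0 ≤ A i j)
    (hAB : ∀ i j, A i j ≤ B i j) : Irred B := fun i j => by
  obtain ⟨k, hk⟩ := hA i j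
  exact ⟨k, hk.trans_le (pow_apply_le_pow_apply hA0 hAB _ i j)⟩

theorem Irred.pos_of_mulVec_eq_smul {S : Matrix m m ℝ} (hS : Irred S) (hS0 : ∀ i j, 0 ≤ S i j)
    {u : m → ℝ} (hu : 0 ≤ u) (hu0 : u ≠ 0) {r : ℝ} (hSu : S *ᵥ u = r • u) (i : m) : 0 < u i := by
  obtain ⟨j, hj⟩ : ∃ j, 0 < u j := by
    by_contra! h
    exact hu0 (funext fun i => le_antisymm (h i) (hu i))
  obtain ⟨k, hk⟩ := hS i j
  have hpow : ∀ k : ℕ, S ^ k *ᵥ u = r ^ k • u := fun k => by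
    induction k with
    | zero => simp
    | succ k ih => rw [pow_succ, ← mulVec_mulVec, hSu, mulVec_smul, ih, smul_smul, pow_succ']
  have : 0 < r ^ (k + 1) * u i := calc
    0 < (S ^ (k + 1)) i j * u j := mul_pos hk hj
    _ ≤ (S ^ (k + 1) *ᵥ u) i :=
      Finset.single_le_sum (f := fun l => (S ^ (k + 1)) i l * u l)
        (fun l _ => mul_nonneg (Matrix.pow_apply_nonneg hS0 _ i l) (hu l)) (Finset.mem_univ j)
    _ = r ^ (k + 1) * u i := by rw [hpow]; rfl
  exact (hu i).lt_of_ne' fun h => by simp [h] at this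

theorem Irred.exists_pos_smul_eq {S : Matrix m m ℝ} (hS : Irred S) (hS0 : ∀ i j, 0 ≤ S i j)
    {x : m → ℝ} (hx : ∀ i, 0 < x i) {r : ℝ} (hSx : S *ᵥ x = r • x) {u : m → ℝ} (hu : 0 ≤ u)
    (hu0 : u ≠ 0) (hSu : S *ᵥ u = r • u) : ∃ c : ℝ, 0 < c ∧ u = c • x := by
  obtain ⟨j, -⟩ := Function.ne_iff.mp hu0
  obtain ⟨i, -, hi⟩ := Finset.exists_min_image Finset.univ (fun k => u k / x k)
    ⟨j, Finset.mem_univ j⟩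
  set c := u i / x i
  refine ⟨c, div_pos (hS.pos_of_mulVec_eq_smul hS0 hu hu0 hSu i) (hx i), ?_⟩
  have hw : 0 ≤ u - c • x := fun k => by
    have := hi k (Finset.mem_univ k)
    rw [div_le_div_iff₀ (hx i) (hx k)] at this
    simp only [Pi.zero_apply, Pi.sub_apply, Pi.smul_apply, smul_eq_mul, sub_nonneg, c,
      div_mul_eq_mul_div, div_le_iff₀ (hx i)]
    linarith
  have hwi : (u - c • x) i = 0 := by
    simp [c, div_mul_cancel₀ _ (hx i).ne']
  have hSw : S *ᵥ (u - c • x) = r • (u - c • x) := by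
    rw [mulVec_sub, mulVec_smul, hSu, hSx, smul_comm, smul_sub]
  by_contra hne
  exact (hS.pos_of_mulVec_eq_smul hS0 hw (sub_ne_zero.mpr hne) hSw i).ne' hwi

theorem le_of_mem_spectrum_of_pos_eigenvector {B : Matrix m m ℝ} (hB : ∀ i j, 0 ≤ B i j)
    {x : m → ℝ} (hx : ∀ i, 0 < x i) {lam : ℝ} (hBx : B *ᵥ x = lam • x) {μ : ℝ}
    (hμ : μ ∈ spectrum ℝ B) : μ ≤ lam := by
  obtain ⟨v, hv0, hv⟩ := mem_spectrum_iff_exists_mulVec_eq_smul.mp hμ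
  exact (le_abs_self μ).trans
    (norm_le_of_pos_eigenvector (𝕜 := ℝ) hB hx hBx hv0 (by simpa using hv))

theorem IsSymm.mulVec_eq_smul_of_le_dotProduct {S : Matrix m m ℝ} (hS : S.IsSymm) {r : ℝ}
    (hr : ∀ μ ∈ spectrum ℝ S, μ ≤ r) {u : m → ℝ} (hu : r * (u ⬝ᵥ u) ≤ u ⬝ᵥ (S *ᵥ u)) :
    S *ᵥ u = r • u := by
  set M := algebraMap ℝ (Matrix m m ℝ) r - S
  have hM : M.PosSemidef := by
    refine posSemidef_iff_isHermitian_and_spectrum_nonneg.mpr ⟨?_, ?_⟩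
    · simp [M, IsHermitian, hS.eq, Algebra.algebraMap_eq_smul_one]
    · rw [← spectrum.singleton_sub_eq]
      rintro _ ⟨_, rfl, μ, hμ, rfl⟩
      exact sub_nonneg.mpr (hr μ hμ)
  have hMu : M *ᵥ u = r • u - S *ᵥ u := by
    simp [M, sub_mulVec, Algebra.algebraMap_eq_smul_one, smul_mulVec]
  have hquad : u ⬝ᵥ (M *ᵥ u) = 0 := by
    refine le_antisymm ?_ (by simpa using hM.dotProduct_mulVec_nonneg u)
    rw [hMu, dotProduct_sub, dotProduct_smul, smul_eq_mul]
    linarith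
  have := (hM.dotProduct_mulVec_zero_iff u).mp (by simpa using hquad)
  rwa [hMu, sub_eq_zero, eq_comm] at this

theorem smul_le_mulVec_of_specRad_eq_half [Nonempty m] {C : Matrix m m ℝ}
    (hC : ∀ i j, 0 ≤ C i j) (hirr : Irred (C + Cᵀ)) {x : m → ℝ} (hx : ∀ i, 0 < x i) {ρ : ℝ}
    (hCx : (C + Cᵀ) *ᵥ x = ρ • x) (hρ : specRad C = ρ / 2) : (ρ / 2) • x ≤ C *ᵥ x := by
  have hS0 : ∀ i j, 0 ≤ (C + Cᵀ) i j := fun i j => add_nonneg (hC i j) (hC j i)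
  obtain ⟨μ, hμ, hμC⟩ := (isGreatest_norm_spectrum_specRad C).1
  obtain ⟨v, hv0, hv⟩ := mem_spectrum_iff_exists_mulVec_eq_smul.mp hμ
  set u : m → ℝ := fun i => ‖v i‖
  have hu : 0 ≤ u := fun i => norm_nonneg (v i)
  have hu0 : u ≠ 0 := fun h => hv0 (funext fun i => norm_eq_zero.mp (congrFun h i))
  have hCu : (ρ / 2) • u ≤ C *ᵥ u := hρ ▸ hμC ▸ norm_smul_le_mulVec_norm hC hv
  have hray : ρ * (u ⬝ᵥ u) ≤ u ⬝ᵥ ((C + Cᵀ) *ᵥ u) := by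
    have hquad := dotProduct_le_dotProduct_of_nonneg_left hCu hu
    rw [dotProduct_smul, smul_eq_mul] at hquad
    rw [add_mulVec, dotProduct_add, dotProduct_mulVec u Cᵀ, vecMul_transpose,
      dotProduct_comm (C *ᵥ u)]
    linarith
  have hSu : (C + Cᵀ) *ᵥ u = ρ • u :=
    IsSymm.mulVec_eq_smul_of_le_dotProduct (by simp [IsSymm, add_comm])
      (fun _ hμ => le_of_mem_spectrum_of_pos_eigenvector hS0 hx hCx hμ) hray
  obtain ⟨c, hc, hcu⟩ := hirr.exists_pos_smul_eq hS0 hx hCx hu hu0 hSu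
  intro i
  have := hCu i
  simp only [hcu, mulVec_smul, Pi.smul_apply, smul_eq_mul, mul_left_comm _ c] at this
  exact le_of_mul_le_mul_left this hc

theorem specRad_levinger_eq [Nonempty m] {A : Matrix m m ℝ} (hA : ∀ i j, 0 ≤ A i j)
    {x : m → ℝ} (hx : ∀ i, 0 < x i) {t : ℝ} (ht : t ∈ Set.Icc (0 : ℝ) 1) {lam : ℝ}
    (h : (1 - t) • (A *ᵥ x) + t • (Aᵀ *ᵥ x) = lam • x) :
    specRad ((1 - t) • A + t • Aᵀ) = lam :=
  specRad_eq_of_pos_eigenvector (B := (1 - t) • A + t • Aᵀ)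
    (fun i j => add_nonneg (mul_nonneg (sub_nonneg.2 ht.2) (hA i j)) (mul_nonneg ht.1 (hA j i)))
    hx (by rwa [add_mulVec, smul_mulVec, smul_mulVec])

theorem sub_mulVec_eq_zero_of_specRad_eq_half [Nonempty m] {A : Matrix m m ℝ}
    (hA : ∀ i j, 0 ≤ A i j) (hirr : Irred A) {x : m → ℝ} (hx : ∀ i, 0 < x i) {ρ : ℝ}
    (hev : (A + Aᵀ) *ᵥ x = ρ • x) (hA2 : specRad A = ρ / 2) (hAT2 : specRad Aᵀ = ρ / 2) :
    (A - Aᵀ) *ᵥ x = 0 := by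
  have hSirr : Irred (A + Aᵀ) := hirr.mono hA fun i j => le_add_of_nonneg_right (hA j i)
  have hAT : Aᵀ + Aᵀᵀ = A + Aᵀ := by rw [transpose_transpose, add_comm]
  have hAx := smul_le_mulVec_of_specRad_eq_half hA hSirr hx hev hA2
  have hATx := smul_le_mulVec_of_specRad_eq_half (C := Aᵀ) (fun i j => hA j i) (hAT ▸ hSirr)
    hx (hAT ▸ hev) hAT2
  funext i
  have hAxi : ρ / 2 * x i ≤ (A *ᵥ x) i := hAx i
  have hATxi : ρ / 2 * x i ≤ (Aᵀ *ᵥ x) i := hATx i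
  have hsum : (A *ᵥ x) i + (Aᵀ *ᵥ x) i = ρ * x i := by
    rw [← Pi.add_apply, ← add_mulVec, hev]; rfl
  rw [sub_mulVec, Pi.sub_apply, Pi.zero_apply]
  linarith

end

/-- For an irreducible nonnegative matrix `A`, Levinger's function is constant
on `[0,1]` if and only if the Perron vector `x` of `A + Aᵀ` (the positive
eigenvector for the spectral radius of `A + Aᵀ`) lies in the null space of
`A − Aᵀ`. -/
theorem levinger_constant_iff_perron_in_nullspace {n : ℕ}
    (A : Matrix (Fin n) (Fin n) ℝ)
    (hnn : ∀ i j, 0 ≤ A i j) (hirr : Irred A)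
    (x : Fin n → ℝ) (hx : ∀ i, 0 < x i)
    (hev : (A + Aᵀ) *ᵥ x = specRad (A + Aᵀ) • x) :
    (∀ s ∈ Set.Icc (0:ℝ) 1, ∀ t ∈ Set.Icc (0:ℝ) 1,
        specRad ((1 - s) • A + s • Aᵀ) = specRad ((1 - t) • A + t • Aᵀ)) ↔
      (A - Aᵀ) *ᵥ x = 0 := by
  cases isEmpty_or_nonempty (Fin n)
  · exact iff_of_true (fun _ _ _ _ => congrArg specRad (Subsingleton.elim _ _))
      (Subsingleton.elim _ _)
  have hhalf : (1 / 2 : ℝ) ∈ Set.Icc (0 : ℝ) 1 := ⟨by norm_num, by norm_num⟩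
  constructor
  · intro hconst
    have hmid : specRad ((1 - 1 / 2 : ℝ) • A + (1 / 2 : ℝ) • Aᵀ) = specRad (A + Aᵀ) / 2 :=
      specRad_levinger_eq hnn hx hhalf (by
        rw [show (1 : ℝ) - 1 / 2 = 1 / 2 by norm_num, ← smul_add, ← add_mulVec, hev, smul_smul]
        ring_nf)
    refine sub_mulVec_eq_zero_of_specRad_eq_half hnn hirr hx hev ?_ ?_
    · simpa only [sub_zero, one_smul, zero_smul, add_zero] using
        (hconst 0 ⟨le_rfl, zero_le_one⟩ (1 / 2) hhalf).trans hmid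
    · simpa only [sub_self, zero_smul, zero_add, one_smul] using
        (hconst 1 ⟨zero_le_one, le_rfl⟩ (1 / 2) hhalf).trans hmid
  · intro h s hs t ht
    obtain ⟨hAx, hATx⟩ := mulVec_eq_half_smul_of_sub_mulVec_eq_zero hev h
    have hconv : ∀ t : ℝ, (1 - t) • (A *ᵥ x) + t • (Aᵀ *ᵥ x) = (specRad (A + Aᵀ) / 2) • x :=
      fun t => by rw [hAx, hATx, ← add_smul, sub_add_cancel, one_smul]
    rw [specRad_levinger_eq hnn hx hs (hconv s), specRad_levinger_eq hnn hx ht (hconv t)]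
end

section
/- Let A ∈ ℝ^{3×3} be the matrix with A₁₂ = 1, A₃₃ = 2/5, and all other entries 0, and for t ∈ [0,1] let B(t) = (1−t)A + tAᵀ. Then the eigenvalues of B(t) are exactly {2/5, √(t(1−t)), −√(t(1−t))}; consequently ρ(B(t)) = max(2/5, √(t(1−t))), and the function t ↦ ρ(B(t)) is not concave on (0,1) (for instance, for all sufficiently small ε > 0, (ρ(B(1/5 − ε)) + ρ(B(1/5 + ε)))/2 > ρ(B(1/5)) = 2/5). -/
open Matrix

/-!
`B(t)` is block diagonal: the block `[[0, 1 - t], [t, 0]]` has eigenvalues `±√(t(1 - t))` and the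
remaining entry is the eigenvalue `2/5`. Hence `ρ(B(t)) = max(2/5, √(t(1 - t)))`, which is constant
`2/5` on `[0, 1/5]`, where `t(1 - t) ≤ 4/25`, but exceeds `2/5` just to the right of `1/5`; so the
midpoint value at `1/5` lies strictly below the chord over `[1/5 - ε, 1/5 + ε]`.
-/

open Polynomial

theorem Matrix.setOf_mem_roots_charpoly_eq_spectrum {K n : Type*} [Field K] [Fintype n]
    [DecidableEq n] (M : Matrix n n K) : {z | z ∈ M.charpoly.roots} = spectrum K M := by
  ext z
  rw [Set.mem_ofPred_eq, mem_roots M.charpoly_monic.ne_zero, mem_spectrum_iff_isRoot_charpoly]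

theorem Polynomial.setOf_mem_roots_X_sub_C_mul_three {K : Type*} [Field K] (a b c : K) :
    {z | z ∈ ((X - C a) * (X - C b) * (X - C c)).roots} = {a, b, c} := by
  ext z
  simp [roots_mul, X_sub_C_ne_zero]

theorem specRad_eq_of_spectrum_eq_three {n : Type*} [Fintype n] [DecidableEq n]
    (M : Matrix n n ℝ) (a b c : ℂ) (h : spectrum ℂ (M.map (fun x : ℝ => (x : ℂ))) = {a, b, c}) :
    specRad M = max ‖a‖ (max ‖b‖ ‖c‖) := by
  rw [specRad, spectralRadius, h, iSup_insert, iSup_insert, iSup_singleton, ← ENNReal.coe_max,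
    ← ENNReal.coe_max, ENNReal.coe_toReal]
  simp only [NNReal.coe_max, coe_nnnorm]

theorem Matrix.charpoly_fin_three_of_sq_eq {R : Type*} [CommRing R] (b c d s : R)
    (hs : s ^ 2 = b * c) :
    (!![0, b, 0; c, 0, 0; 0, 0, d]).charpoly = (X - C d) * (X - C s) * (X - C (-s)) := by
  have hC : C s * C s = C b * C c := by rw [← C_mul, ← C_mul, ← sq, hs]
  rw [Matrix.charpoly, Matrix.det_fin_three]
  simp
  linear_combination (X - C d) * hC

section SwapBlock

variable (b c d : ℝ)

theorem charpoly_map_ofReal_fin_three (hbc : 0 ≤ b * c) :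
    ((!![0, b, 0; c, 0, 0; 0, 0, d]).map (fun x : ℝ => (x : ℂ))).charpoly =
      (X - C (d : ℂ)) * (X - C (√(b * c) : ℂ)) * (X - C (-√(b * c) : ℂ)) := by
  rw [show (fun x : ℝ => (x : ℂ)) = ⇑Complex.ofRealHom from rfl, charpoly_map,
    charpoly_fin_three_of_sq_eq b c d _ (Real.sq_sqrt hbc)]
  simp

theorem setOf_mem_roots_charpoly_map_ofReal_fin_three (hbc : 0 ≤ b * c) :
    {z | z ∈ ((!![0, b, 0; c, 0, 0; 0, 0, d]).map (fun x : ℝ => (x : ℂ))).charpoly.roots} =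
      {(d : ℂ), (√(b * c) : ℂ), -(√(b * c) : ℂ)} := by
  rw [charpoly_map_ofReal_fin_three b c d hbc, setOf_mem_roots_X_sub_C_mul_three]

theorem specRad_fin_three (hbc : 0 ≤ b * c) (hd : 0 ≤ d) :
    specRad !![0, b, 0; c, 0, 0; 0, 0, d] = max d √(b * c) := by
  have h := setOf_mem_roots_charpoly_map_ofReal_fin_three b c d hbc
  rw [setOf_mem_roots_charpoly_eq_spectrum] at h
  rw [specRad_eq_of_spectrum_eq_three _ _ _ _ h]
  simp [abs_of_nonneg hd, abs_of_nonneg (Real.sqrt_nonneg _)]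

end SwapBlock

theorem levinger_homotopy_fin_three (a d t : ℝ) :
    (1 - t) • !![0, a, 0; 0, 0, 0; 0, 0, d] + t • (!![0, a, 0; 0, 0, 0; 0, 0, d])ᵀ =
      !![0, (1 - t) * a, 0; t * a, 0, 0; 0, 0, d] := by
  ext i j
  fin_cases i <;> fin_cases j <;> simp; ring

theorem not_concaveOn_of_lt_midpoint {s : Set ℝ} {f : ℝ → ℝ} {x y : ℝ} (hx : x ∈ s) (hy : y ∈ s)
    (h : f ((x + y) / 2) < (f x + f y) / 2) : ¬ ConcaveOn ℝ s f := by
  intro hf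
  have := hf.2 hx hy (by norm_num : (0:ℝ) ≤ 1/2) (by norm_num : (0:ℝ) ≤ 1/2) (by norm_num)
  simp only [smul_eq_mul] at this
  rw [show 1/2 * x + 1/2 * y = (x+y)/2 by ring] at this
  linarith

theorem two_fifths_lt_max_sqrt_midpoint (ε : ℝ) (hε : ε ∈ Set.Ioo (0 : ℝ) (3 / 5)) :
    2 / 5 < (max (2 / 5) √((1 / 5 - ε) * (1 - (1 / 5 - ε))) +
      max (2 / 5) √((1 / 5 + ε) * (1 - (1 / 5 + ε)))) / 2 := by
  have right : 2 / 5 < √((1 / 5 + ε) * (1 - (1 / 5 + ε))) := by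
    rw [Real.lt_sqrt (by norm_num)]
    nlinarith [hε.1, hε.2]
  linarith [le_max_left (2 / 5 : ℝ) √((1 / 5 - ε) * (1 - (1 / 5 - ε))),
    lt_max_of_lt_right (b := (2 / 5 : ℝ)) right]

/-- For the concrete `3 × 3` matrix with `A₁₂ = 1`, `A₃₃ = 2/5` and zeros
elsewhere, the eigenvalues of the Levinger homotopy `B(t)` are exactly
`{2/5, √(t(1−t)), −√(t(1−t))}`, so `ρ(B(t)) = max(2/5, √(t(1−t)))`, and
Levinger's function is not concave on `(0,1)`; in particular for all
sufficiently small `ε > 0` the midpoint inequality at `t = 1/5` fails. -/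
theorem levinger_simple_counterexample
    (A : Matrix (Fin 3) (Fin 3) ℝ)
    (hA : A = !![0, 1, 0; 0, 0, 0; 0, 0, 2/5])
    (B : ℝ → Matrix (Fin 3) (Fin 3) ℝ)
    (hB : ∀ t : ℝ, B t = (1 - t) • A + t • Aᵀ) :
    (∀ t ∈ Set.Icc (0:ℝ) 1,
      ({z : ℂ | z ∈ ((B t).map (fun x : ℝ => (x : ℂ))).charpoly.roots} =
        {((2/5 : ℝ) : ℂ), ((Real.sqrt (t * (1 - t)) : ℝ) : ℂ),
          (-(Real.sqrt (t * (1 - t))) : ℂ)} ∧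
      specRad (B t) = max (2/5) (Real.sqrt (t * (1 - t))))) ∧
    ¬ ConcaveOn ℝ (Set.Ioo (0:ℝ) 1) (fun t : ℝ => specRad (B t)) ∧
    specRad (B (1/5)) = 2/5 ∧
    ∃ ε₀ > (0:ℝ), ∀ ε ∈ Set.Ioo (0:ℝ) ε₀,
      (specRad (B (1/5 - ε)) + specRad (B (1/5 + ε))) / 2 > specRad (B (1/5)) := by
  have hBt (t : ℝ) : B t = !![0, 1 - t, 0; t, 0, 0; 0, 0, 2/5] := by
    rw [hB, hA, levinger_homotopy_fin_three]
    simp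
  have spectral (t : ℝ) (ht : t ∈ Set.Icc (0 : ℝ) 1) :
      {z : ℂ | z ∈ ((B t).map (fun x : ℝ => (x : ℂ))).charpoly.roots} =
        {((2/5 : ℝ) : ℂ), ((√(t * (1 - t)) : ℝ) : ℂ), (-(√(t * (1 - t))) : ℂ)} ∧
      specRad (B t) = max (2/5) √(t * (1 - t)) := by
    have hbc : 0 ≤ (1 - t) * t := mul_nonneg (by linarith [ht.2]) ht.1
    rw [hBt, mul_comm t]
    exact ⟨setOf_mem_roots_charpoly_map_ofReal_fin_three _ _ _ hbc,
      specRad_fin_three _ _ _ hbc (by norm_num)⟩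
  have at_fifth : specRad (B (1/5)) = 2/5 := by
    rw [(spectral _ (by norm_num)).2, show (1/5 : ℝ) * (1 - 1/5) = (2/5) ^ 2 by norm_num,
      Real.sqrt_sq (by norm_num), max_self]
  have midpoint_gap (ε : ℝ) (hε : ε ∈ Set.Ioo (0 : ℝ) (1/5)) :
      (specRad (B (1/5 - ε)) + specRad (B (1/5 + ε))) / 2 > specRad (B (1/5)) := by
    obtain ⟨hε0, hε1⟩ := hε
    rw [(spectral (1/5 - ε) ⟨by linarith, by linarith⟩).2,
      (spectral (1/5 + ε) ⟨by linarith, by linarith⟩).2, at_fifth]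
    exact two_fifths_lt_max_sqrt_midpoint ε ⟨hε0, by linarith⟩
  refine ⟨spectral, ?_, at_fifth, 1/5, by norm_num, midpoint_gap⟩
  refine not_concaveOn_of_lt_midpoint (x := 1/10) (y := 3/10) (by norm_num) (by norm_num) ?_
  convert midpoint_gap (1/10) (by norm_num) using 3 <;> norm_num
end
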